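/- arXiv:2204.11199 — 7 statements merged into one kernel-verified Lean document; each statement's English description precedes it below -/
import Mathlib

section
/- Let n, m, s, t be non-negative integers satisfying 2mn + m = 2st + s and n² + n + m² = t² + t + s². Then m = s and n = t. -/
/-- If non-negative integers `n, m, s, t` satisfy `2mn + m = 2st + s` and
`n² + n + m² = t² + t + s²`, then `m = s` and `n = t`. -/
theorem stmt2 (n m s t : ℕ) (h1 : 2 * m * n + m = 2 * s * t + s)
    (h2 : n ^ 2 + n + m ^ 2 = t ^ 2 + t + s ^ 2) : m = s ∧ n = t := by
  have h1' : (2 * m * n + m : ℤ) = 2 * s * t + s := by exact_mod_cast h1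
  have h2' : ((n : ℤ) ^ 2 + n + m ^ 2) = t ^ 2 + t + s ^ 2 := by exact_mod_cast h2
  have sq1 : ((2*n+1+2*m : ℤ)) ^ 2 = (2*t+1+2*s) ^ 2 := by
    linear_combination 4 * h2' + 4 * h1'
  have e1 : (2*(n:ℤ)+1+2*m) = 2*t+1+2*s := by
    nlinarith [sq1, Int.natCast_nonneg n, Int.natCast_nonneg m, Int.natCast_nonneg s,
      Int.natCast_nonneg t]
  have sq2 : ((2*n+1-2*m : ℤ) - (2*t+1-2*s)) * ((2*n+1-2*m) + (2*t+1-2*s)) = 0 := by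
    linear_combination 4 * h2' - 4 * h1'
  rcases mul_eq_zero.mp sq2 with h | h <;> constructor <;> omega
end

section
/- Let G = ⊕ₚ G(p) be a finite abelian group with g = (g_p)_p ∈ G, and let n ≥ 1 be an integer with prime decomposition n = ∏ₚ p^{n_p}. Then for each prime p, the p-primary component of (G ⊕ ℤ)/⟨(g, n)⟩ is isomorphic to (G(p) ⊕ ℤ)/⟨(g_p, p^{n_p})⟩. -/
/-!
Put `c = |G| n`, which kills both `G` and `Q = (G × ℤ)/⟨(g, n)⟩`, and write `c = p^K B` with
`p ∤ B`. An integer `e ≡ 0 mod B`, `e ≡ 1 mod p^K` acts on every group killed by `c` as the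
projection onto its `p`-primary component; in particular `e g = g_p`. Write `n = p^k m` and
choose `a` with `m a ≡ 1 mod p^K`. Then `(x, u) ↦ (e x, a u)` and `(y, v) ↦ (e y, e m v)` descend
to maps between `Q` and `T = (G(p) × ℤ)/⟨(g_p, p^k)⟩`, and both composites are multiplication by
`e m a ≡ 1 mod p^K`, which is the identity on `Q(p)` and on `T`, since both are killed by `p^K`.
-/

open AddSubgroup

theorem zsmul_eq_self_of_zsmul_eq_zero {A : Type*} [AddCommGroup A] {x : A} {d s : ℤ}
    (hx : d • x = 0) (hs : d ∣ s - 1) : s • x = x := by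
  obtain ⟨t, ht⟩ := hs
  have : (s - 1) • x = 0 := by rw [ht, mul_comm, mul_smul, hx, smul_zero]
  rwa [sub_smul, one_smul, sub_eq_zero] at this

namespace AddCommGroup

variable {A : Type*} [AddCommGroup A] {p c : ℕ} {x : A}

theorem ordProj_smul_eq_zero_of_mem_primaryComponent [Fact p.Prime] (hc : c ≠ 0)
    (hcx : c • x = 0) (hx : x ∈ primaryComponent A p) : ordProj[p] c • x = 0 := by
  obtain ⟨i, hi⟩ := mem_primaryComponent_iff_addOrderOf.mp hx
  rw [← addOrderOf_dvd_iff_nsmul_eq_zero] at hcx ⊢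
  rw [hi] at hcx ⊢
  exact (Nat.Prime.pow_dvd_iff_dvd_ordProj Fact.out hc).mp hcx

theorem zsmul_eq_self_of_mem_primaryComponent [Fact p.Prime] (hc : c ≠ 0) (hcx : c • x = 0)
    (hx : x ∈ primaryComponent A p) {s : ℤ} (hs : ((ordProj[p] c : ℕ) : ℤ) ∣ s - 1) : s • x = x :=
  zsmul_eq_self_of_zsmul_eq_zero
    (by rw [natCast_zsmul]; exact ordProj_smul_eq_zero_of_mem_primaryComponent hc hcx hx) hs

theorem zsmul_mem_primaryComponent (hcx : c • x = 0) {e : ℤ} (he : ((ordCompl[p] c : ℕ) : ℤ) ∣ e) :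
    e • x ∈ primaryComponent A p := by
  obtain ⟨t, rfl⟩ := he
  have : ordCompl[p] c • x ∈ primaryComponent A p :=
    mem_primaryComponent.mpr ⟨c.factorization p, by
      rw [← mul_nsmul', Nat.ordProj_mul_ordCompl_eq_self, hcx]⟩
  rw [mul_comm, mul_smul, natCast_zsmul]
  exact zsmul_mem this t

theorem zsmul_eq_zero_of_coprime [Fact p.Prime] (hcx : c • x = 0)
    (hx : (addOrderOf x).Coprime p) {e : ℤ} (he : ((ordCompl[p] c : ℕ) : ℤ) ∣ e) : e • x = 0 := by
  refine (addOrderOf_dvd_iff_zsmul_eq_zero).mp (dvd_trans ?_ he)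
  exact Int.natCast_dvd_natCast.mpr <| Nat.dvd_ordCompl_of_dvd_not_dvd
    (addOrderOf_dvd_of_nsmul_eq_zero hcx) ((Nat.Prime.coprime_iff_not_dvd Fact.out).mp hx.symm)

end AddCommGroup

namespace QuotientAddGroup

variable {A B : Type*} [AddCommGroup A] [AddCommGroup B] {a : A} {b : B} {d d' : ℤ}

theorem zsmul_eq_zero_of_quotient_zmultiples {c : ℕ} (hA : ∀ x : A, c • x = 0)
    (q : (A × ℤ) ⧸ zmultiples (a, d)) : ((c : ℤ) * d) • q = 0 := by
  induction q using QuotientAddGroup.induction_on with | _ y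
  rw [← mk_zsmul, eq_zero_iff, mem_zmultiples_iff]
  refine ⟨c * y.2, Prod.ext ?_ ?_⟩
  · simp only [Prod.smul_fst, mul_smul, natCast_zsmul, hA]
  · simp only [Prod.smul_snd, smul_eq_mul]
    ring

def prodZsmulMap (f : A →+ B) (r t : ℤ) (hf : f a = t • b) (hr : r * d = t * d') :
    (A × ℤ) ⧸ zmultiples (a, d) →+ (B × ℤ) ⧸ zmultiples (b, d') :=
  map _ _ (f.prodMap (zsmulAddGroupHom r)) <| zmultiples_le.mpr <|
    mem_zmultiples_iff.mpr ⟨t, Prod.ext hf.symm (by simp [hr])⟩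

@[simp]
theorem prodZsmulMap_mk (f : A →+ B) (r t : ℤ) (hf : f a = t • b) (hr : r * d = t * d') (x : A)
    (u : ℤ) : prodZsmulMap f r t hf hr (mk (x, u)) = mk (f x, r * u) :=
  rfl

theorem prodZsmulMap_prodZsmulMap {f : A →+ B} {f' : B →+ A} {r r' t t' s : ℤ}
    {hf : f a = t • b} {hr : r * d = t * d'} {hf' : f' b = t' • a} {hr' : r' * d' = t' * d}
    (hff' : ∀ x, f' (f x) = s • x) (hrr' : r' * r = s) (q : (A × ℤ) ⧸ zmultiples (a, d)) :
    prodZsmulMap f' r' t' hf' hr' (prodZsmulMap f r t hf hr q) = s • q := by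
  induction q using QuotientAddGroup.induction_on with | _ y
  rw [← mk_zsmul, prodZsmulMap_mk, prodZsmulMap_mk, hff', ← mul_assoc, hrr']
  rfl

end QuotientAddGroup

def AddSubgroup.equivOfCompEqZsmul {Q T : Type*} [AddCommGroup Q] [AddCommGroup T]
    (P : AddSubgroup Q) (Φ : Q →+ T) (Ψ : T →+ Q) (s : ℤ) (hΨ : ∀ t, Ψ t ∈ P)
    (hΨΦ : ∀ q, Ψ (Φ q) = s • q) (hΦΨ : ∀ t, Φ (Ψ t) = s • t) (hP : ∀ q ∈ P, s • q = q)
    (hT : ∀ t : T, s • t = t) : P ≃+ T where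
  toFun q := Φ q
  invFun t := ⟨Ψ t, hΨ t⟩
  left_inv q := Subtype.ext <| (hΨΦ q).trans (hP q q.2)
  right_inv t := (hΦΨ t).trans (hT t)
  map_add' _ _ := map_add Φ _ _

open AddCommGroup QuotientAddGroup

section

variable {G : Type*} [AddCommGroup G] {p c : ℕ} {e : ℤ}

def primaryProjection (hG : ∀ x : G, c • x = 0) (he : ((ordCompl[p] c : ℕ) : ℤ) ∣ e) :
    G →+ primaryComponent G p :=
  (zsmulAddGroupHom e).codRestrict _ fun x => zsmul_mem_primaryComponent (hG x) he

theorem coe_primaryProjection (hG : ∀ x : G, c • x = 0) (he : ((ordCompl[p] c : ℕ) : ℤ) ∣ e)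
    (x : G) : (primaryProjection hG he x : G) = e • x :=
  rfl

theorem primaryProjection_coe [Fact p.Prime] (hc : c ≠ 0) (hG : ∀ x : G, c • x = 0)
    (he : ((ordCompl[p] c : ℕ) : ℤ) ∣ e) (he1 : ((ordProj[p] c : ℕ) : ℤ) ∣ e - 1)
    (y : primaryComponent G p) : primaryProjection hG he y = y :=
  Subtype.ext <| zsmul_eq_self_of_mem_primaryComponent hc (hG y) y.2 he1

theorem primaryProjection_coe_add_of_coprime [Fact p.Prime] (hc : c ≠ 0)
    (hG : ∀ x : G, c • x = 0) (he : ((ordCompl[p] c : ℕ) : ℤ) ∣ e)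
    (he1 : ((ordProj[p] c : ℕ) : ℤ) ∣ e - 1) (y : primaryComponent G p) {h : G}
    (hh : (addOrderOf h).Coprime p) : primaryProjection hG he (y + h) = y := by
  rw [map_add, primaryProjection_coe hc hG he he1, add_eq_left]
  exact Subtype.ext (zsmul_eq_zero_of_coprime (hG h) hh he)

theorem ordProj_mul_zsmul_eq_zero_of_quotient [Fact p.Prime] (hc : c ≠ 0)
    (hG : ∀ x : G, c • x = 0) {n : ℕ} (hn : n ≠ 0) {gp : primaryComponent G p}
    (t : (primaryComponent G p × ℤ) ⧸ zmultiples (gp, (p : ℤ) ^ n.factorization p)) :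
    ((ordProj[p] (c * n) : ℕ) : ℤ) • t = 0 := by
  have hGp : ∀ y : primaryComponent G p, ordProj[p] c • y = 0 := fun y =>
    Subtype.ext (ordProj_smul_eq_zero_of_mem_primaryComponent hc (hG y) y.2)
  simpa [Nat.ordProj_mul p hc hn] using zsmul_eq_zero_of_quotient_zmultiples hGp t

theorem nonempty_primaryComponent_quotient_addEquiv_of_idempotent [Fact p.Prime] (hc : c ≠ 0)
    (hG : ∀ x : G, c • x = 0) {g h : G} {gp : primaryComponent G p}
    (hcop : (addOrderOf h).Coprime p) (hsum : g = gp + h) {n : ℕ} (hn : n ≠ 0) {a : ℤ}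
    (he : ((ordCompl[p] (c * n) : ℕ) : ℤ) ∣ e) (he1 : ((ordProj[p] (c * n) : ℕ) : ℤ) ∣ e - 1)
    (ha : ((ordProj[p] (c * n) : ℕ) : ℤ) ∣ (ordCompl[p] n : ℕ) * a - 1) :
    Nonempty (primaryComponent ((G × ℤ) ⧸ zmultiples (g, (n : ℤ))) p ≃+
      (primaryComponent G p × ℤ) ⧸ zmultiples (gp, (p : ℤ) ^ n.factorization p)) := by
  set m : ℤ := ((ordCompl[p] n : ℕ) : ℤ) with hm
  have hN : c * n ≠ 0 := mul_ne_zero hc hn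
  have hGN : ∀ x : G, (c * n) • x = 0 := fun x => by rw [mul_nsmul, hG, nsmul_zero]
  have hQ : ∀ q : (G × ℤ) ⧸ zmultiples (g, (n : ℤ)), (c * n) • q = 0 := fun q => by
    simpa [← natCast_zsmul] using zsmul_eq_zero_of_quotient_zmultiples hG q
  have hT := ordProj_mul_zsmul_eq_zero_of_quotient hc hG hn (gp := gp)
  have hn' : (n : ℤ) = (p : ℤ) ^ n.factorization p * m := by
    rw [hm]; exact_mod_cast (Nat.ordProj_mul_ordCompl_eq_self n p).symm
  have hs : ((ordProj[p] (c * n) : ℕ) : ℤ) ∣ e * (m * a) - 1 := by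
    rw [show e * (m * a) - 1 = e * (m * a - 1) + (e - 1) by ring]
    exact dvd_add (dvd_mul_of_dvd_right ha e) he1
  have hfix {r : ℤ} (hr : ((ordProj[p] (c * n) : ℕ) : ℤ) ∣ r - 1) (y : primaryComponent G p) :
      r • y = y := Subtype.ext (zsmul_eq_self_of_mem_primaryComponent hN (hGN y) y.2 hr)
  have hπg : primaryProjection hGN he g = gp :=
    hsum ▸ primaryProjection_coe_add_of_coprime hN hGN he he1 gp hcop
  refine ⟨AddSubgroup.equivOfCompEqZsmul _
    (prodZsmulMap (primaryProjection hGN he) a (m * a) (by rw [hπg, hfix ha]) (by rw [hn']; ring))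
    (prodZsmulMap ((zsmulAddGroupHom e).comp (primaryComponent G p).subtype) (e * m) e ?_
      (by rw [hn']; ring))
    (e * (m * a)) (fun t => ?_) (prodZsmulMap_prodZsmulMap (fun x => ?_) (by ring))
    (prodZsmulMap_prodZsmulMap (fun y => ?_) (by ring))
    (fun q hq => zsmul_eq_self_of_mem_primaryComponent hN (hQ q) hq hs)
    (fun t => zsmul_eq_self_of_zsmul_eq_zero (hT t) hs)⟩
  · rw [← coe_primaryProjection hGN he, hπg]
    exact congrArg Subtype.val (hfix he1 gp)
  · -- `e` fixes `t`, so the image of `t` is a multiple of `e`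
    rw [← zsmul_eq_self_of_zsmul_eq_zero (hT t) he1, map_zsmul]
    exact zsmul_mem_primaryComponent (hQ _) he
  · have hex : e • x ∈ primaryComponent G p := zsmul_mem_primaryComponent (hGN x) he
    change e • e • x = _
    rw [zsmul_eq_self_of_mem_primaryComponent hN (hGN _) hex he1, mul_comm, mul_smul,
      zsmul_eq_self_of_mem_primaryComponent hN (hGN _) hex ha]
  · change primaryProjection hGN he (e • (y : G)) = _
    rw [zsmul_eq_self_of_mem_primaryComponent hN (hGN y) y.2 he1,
      primaryProjection_coe hN hGN he he1, hfix hs]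

end

/-- For a finite abelian group `G`, `g ∈ G` with `p`-component `gp`, and `n ≥ 1` with
`p`-adic valuation `n_p`, the `p`-primary component of `(G ⊕ ℤ) ⧸ ⟨(g, n)⟩` is isomorphic to
`(G(p) ⊕ ℤ) ⧸ ⟨(gp, p^{n_p})⟩`. -/
theorem stmt4 {p : ℕ} [Fact p.Prime] {G : Type*} [AddCommGroup G] [Finite G]
    (g : G) (gp : AddCommGroup.primaryComponent G p) (h : G)
    (hcop : (addOrderOf h).Coprime p) (hsum : g = (gp : G) + h)
    (n : ℕ) (hn : 1 ≤ n) :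
    Nonempty ((AddCommGroup.primaryComponent ((G × ℤ) ⧸
        AddSubgroup.zmultiples ((g, (n : ℤ)) : G × ℤ)) p) ≃+
      (((AddCommGroup.primaryComponent G p) × ℤ) ⧸
        AddSubgroup.zmultiples ((gp, (p : ℤ) ^ (n.factorization p)) :
          (AddCommGroup.primaryComponent G p) × ℤ))) := by
  have hp : p.Prime := Fact.out
  have hn0 : n ≠ 0 := by omega
  have hc : Nat.card G ≠ 0 := Nat.card_pos.ne'
  have hN : Nat.card G * n ≠ 0 := mul_ne_zero hc hn0
  obtain ⟨v, hv⟩ := Int.mod_coprime ((Nat.coprime_ordCompl hp hN).pow_left _).symm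
  obtain ⟨a, ha⟩ := Int.mod_coprime
    ((Nat.coprime_ordCompl hp hn0).pow_left ((Nat.card G * n).factorization p)).symm
  exact nonempty_primaryComponent_quotient_addEquiv_of_idempotent hc (fun _ => card_nsmul_eq_zero')
    hcop hsum hn0 (dvd_mul_right _ v) hv.symm.dvd ha.symm.dvd
end

section
/- In the group ℤ/p^{k₁}ℤ ⊕ ⋯ ⊕ ℤ/p^{k_s}ℤ with integers 0 < r_i ≤ k_i satisfying k_i < k_{i+1}, r_i < r_{i+1}, and k_i − r_i < k_{i+1} − r_{i+1}, the quotient by the cyclic subgroup generated by (p^{k₁−r₁}, …, p^{k_s−r_s}) is isomorphic to ℤ/p^{k₁−r₁}ℤ ⊕ ℤ/p^{k₂−r₂+r₁}ℤ ⊕ ⋯ ⊕ ℤ/p^{k_s−r_s+r_{s−1}}ℤ. -/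
namespace Stmt7Aux

/-- The target exponents. -/
def M (k r : ℕ → ℕ) (i : ℕ) : ℕ := if i = 0 then k 0 - r 0 else k i - r i + r (i - 1)

variable {p s : ℕ} {k r : ℕ → ℕ}

/-- The "previous coordinate" component map, multiplication by `p ^ (M i - k (i-1))`. -/
def B (p : ℕ) (k r : ℕ → ℕ) (i : ℕ) (hle : k (i - 1) ≤ M k r i) :
    ZMod (p ^ k (i - 1)) →+ ZMod (p ^ M k r i) :=
  ZMod.lift _ ⟨AddMonoidHom.mk'
      (fun t => (p : ZMod (p ^ M k r i)) ^ (M k r i - k (i - 1)) * t)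
      (fun a b => by push_cast; ring),
    by
      show (p : ZMod (p ^ M k r i)) ^ (M k r i - k (i - 1)) * ((p ^ k (i - 1) : ℕ) : ℤ) = 0
      push_cast
      rw [← pow_add, Nat.sub_add_cancel hle, ← Nat.cast_pow, ZMod.natCast_self]⟩

lemma B_natCast (i : ℕ) (hle : k (i - 1) ≤ M k r i) (n : ℕ) :
    B p k r i hle ((n : ℕ) : ZMod (p ^ k (i - 1)))
      = (p : ZMod (p ^ M k r i)) ^ (M k r i - k (i - 1)) * n := by
  have h : ((n : ℕ) : ZMod (p ^ k (i - 1))) = ((n : ℤ) : ZMod (p ^ k (i - 1))) := by push_cast; rfl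
  rw [h, B, ZMod.lift_coe]
  show (p : ZMod (p ^ M k r i)) ^ (M k r i - k (i - 1)) * ((n : ℤ) : ZMod (p ^ M k r i)) = _
  push_cast
  rfl

/-- The homomorphism to the target. -/
def psi (p s : ℕ) (k r : ℕ → ℕ)
    (hM : ∀ i : Fin s, M k r i.1 ≤ k i.1)
    (hle : ∀ i : Fin s, i.1 ≠ 0 → k (i.1 - 1) ≤ M k r i.1) :
    (∀ i : Fin s, ZMod (p ^ k i.1)) →+ (∀ i : Fin s, ZMod (p ^ M k r i.1)) :=
  AddMonoidHom.mk'
    (fun x i => ZMod.castHom (pow_dvd_pow p (hM i)) (ZMod (p ^ M k r i.1)) (x i) -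
      (if h : i.1 = 0 then 0 else B p k r i.1 (hle i h) (x ⟨i.1 - 1, by omega⟩)))
    (fun a b => by
      funext i
      by_cases h : i.1 = 0 <;> simp [h, Pi.add_apply, map_add] <;> ring_nf)

lemma psi_apply (hM) (hle) (x : ∀ i : Fin s, ZMod (p ^ k i.1)) (i : Fin s) :
    psi p s k r hM hle x i =
      ZMod.castHom (pow_dvd_pow p (hM i)) (ZMod (p ^ M k r i.1)) (x i) -
        (if h : i.1 = 0 then 0 else B p k r i.1 (hle i h) (x ⟨i.1 - 1, by omega⟩)) := rfl

end Stmt7Aux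

/-- In `ℤ/p^{k₁} ⊕ ⋯ ⊕ ℤ/p^{k_s}` with `0 < rᵢ ≤ kᵢ`, `kᵢ < kᵢ₊₁`, `rᵢ < rᵢ₊₁` and
`kᵢ − rᵢ < kᵢ₊₁ − rᵢ₊₁`, the quotient by the cyclic subgroup generated by
`(p^{k₁−r₁}, …, p^{k_s−r_s})` is isomorphic to
`ℤ/p^{k₁−r₁} ⊕ ℤ/p^{k₂−r₂+r₁} ⊕ ⋯ ⊕ ℤ/p^{k_s−r_s+r_{s−1}}`. -/
theorem stmt7 {p : ℕ} (hp : p.Prime) (s : ℕ) (hs : 2 ≤ s) (k r : ℕ → ℕ)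
    (hr0 : ∀ i < s, 0 < r i) (hrk : ∀ i < s, r i ≤ k i)
    (hk : ∀ i, i + 1 < s → k i < k (i + 1))
    (hr : ∀ i, i + 1 < s → r i < r (i + 1))
    (hkr : ∀ i, i + 1 < s → k i - r i < k (i + 1) - r (i + 1)) :
    Nonempty (((∀ i : Fin s, ZMod (p ^ k i.1)) ⧸
        AddSubgroup.zmultiples
          (fun i : Fin s => ((p ^ (k i.1 - r i.1) : ℕ) : ZMod (p ^ k i.1)))) ≃+
      (∀ i : Fin s, ZMod (p ^ (if i.1 = 0 then k 0 - r 0 else k i.1 - r i.1 + r (i.1 - 1))))) := by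
  haveI : ∀ n : ℕ, NeZero (p ^ n) := fun n => ⟨pow_ne_zero n hp.ne_zero⟩
  set v : ∀ i : Fin s, ZMod (p ^ k i.1) :=
    fun i : Fin s => ((p ^ (k i.1 - r i.1) : ℕ) : ZMod (p ^ k i.1)) with hv
  -- basic inequalities
  have hM : ∀ i : Fin s, Stmt7Aux.M k r i.1 ≤ k i.1 := by
    rintro ⟨i, his⟩
    rcases Nat.eq_zero_or_pos i with h | h
    · subst h
      show Stmt7Aux.M k r 0 ≤ k 0
      have h0 : Stmt7Aux.M k r 0 = k 0 - r 0 := if_pos rfl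
      omega
    · obtain ⟨j, rfl⟩ : ∃ j, i = j + 1 := ⟨i - 1, by omega⟩
      simp only [Stmt7Aux.M, if_neg (Nat.succ_ne_zero j), Nat.add_sub_cancel]
      have h1 := hr j his
      have h2 := hrk (j + 1) his
      omega
  have hle : ∀ i : Fin s, i.1 ≠ 0 → k (i.1 - 1) ≤ Stmt7Aux.M k r i.1 := by
    rintro ⟨i, his⟩ hi
    have hi' : i ≠ 0 := hi
    obtain ⟨j, rfl⟩ : ∃ j, i = j + 1 := ⟨i - 1, by omega⟩
    simp only [Stmt7Aux.M, if_neg (Nat.succ_ne_zero j), Nat.add_sub_cancel]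
    have h1 := hkr j his
    have h2 := hrk j (by omega)
    have h3 := hrk (j + 1) his
    omega
  set ψ := Stmt7Aux.psi p s k r hM hle with hψ
  -- the generator maps to zero
  have hv0 : ψ v = 0 := by
    funext i
    rcases i with ⟨i, his⟩
    rw [Stmt7Aux.psi_apply]
    rcases Nat.eq_zero_or_pos i with h | h
    · subst h
      rw [dif_pos rfl, sub_zero, map_natCast]
      have hM0 : Stmt7Aux.M k r 0 = k 0 - r 0 := if_pos rfl
      rw [Pi.zero_apply, show ((p ^ (k 0 - r 0) : ℕ) : ZMod (p ^ Stmt7Aux.M k r 0)) =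
        ((p ^ Stmt7Aux.M k r 0 : ℕ) : ZMod (p ^ Stmt7Aux.M k r 0)) from by rw [hM0],
        ZMod.natCast_self]
    · obtain ⟨j, rfl⟩ : ∃ j, i = j + 1 := ⟨i - 1, by omega⟩
      rw [dif_neg (Nat.succ_ne_zero j), map_natCast]
      show ((p ^ (k (j+1) - r (j+1)) : ℕ) : ZMod (p ^ Stmt7Aux.M k r (j+1))) -
        Stmt7Aux.B p k r (j+1) (hle ⟨j+1, his⟩ (Nat.succ_ne_zero j))
          ((p ^ (k j - r j) : ℕ) : ZMod (p ^ k j)) = 0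
      rw [Stmt7Aux.B_natCast]
      have hexp : (Stmt7Aux.M k r (j+1) - k j) + (k j - r j) = k (j+1) - r (j+1) := by
        have hMj : Stmt7Aux.M k r (j+1) = k (j+1) - r (j+1) + r j := by
          simp [Stmt7Aux.M]
        have h1 := hkr j his
        have h2 := hrk j (by omega)
        have h3 := hrk (j + 1) his
        omega
      push_cast
      rw [← pow_add, hexp, sub_self]
  have hker_le : AddSubgroup.zmultiples v ≤ ψ.ker := by
    rw [AddSubgroup.zmultiples_le]
    exact hv0
  -- surjectivity
  have hsurj : Function.Surjective ψ := by
    intro z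
    let X : ∀ j : ℕ, ZMod (p ^ k j) := fun j => Nat.rec
      (motive := fun j => ZMod (p ^ k j))
      (if h : 0 < s then (((z ⟨0, h⟩).val : ℕ) : ZMod (p ^ k 0)) else 0)
      (fun j ih => if h : j + 1 < s then
        ((((z ⟨j + 1, h⟩).val + p ^ (Stmt7Aux.M k r (j + 1) - k j) * ih.val : ℕ))
          : ZMod (p ^ k (j + 1))) else 0) j
    refine ⟨fun i => X i.1, ?_⟩
    funext i
    rcases i with ⟨i, his⟩
    rw [Stmt7Aux.psi_apply]
    rcases Nat.eq_zero_or_pos i with h | h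
    · subst h
      rw [dif_pos rfl, sub_zero]
      show ZMod.castHom _ _ (X 0) = _
      rw [show X 0 = (((z ⟨0, his⟩).val : ℕ) : ZMod (p ^ k 0)) from dif_pos his,
        map_natCast, ZMod.natCast_val, ZMod.cast_id]
    · obtain ⟨j, rfl⟩ : ∃ j, i = j + 1 := ⟨i - 1, by omega⟩
      rw [dif_neg (Nat.succ_ne_zero j)]
      show ZMod.castHom _ _ (X (j+1)) - Stmt7Aux.B p k r (j+1) _ (X j) = _
      rw [show X (j+1) = ((((z ⟨j + 1, his⟩).val + p ^ (Stmt7Aux.M k r (j + 1) - k j) * (X j).val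
          : ℕ)) : ZMod (p ^ k (j + 1))) from dif_pos his,
        show X j = (((X j).val : ℕ) : ZMod (p ^ k j)) from by rw [ZMod.natCast_val, ZMod.cast_id],
        Stmt7Aux.B_natCast, map_natCast]
      push_cast
      rw [ZMod.natCast_val, ZMod.cast_id]
      ring_nf
      rw [ZMod.natCast_val (X j), ZMod.cast_id]
      abel
  -- monotonicity of r
  have hrmono : ∀ i j : ℕ, i ≤ j → j < s → r i ≤ r j := by
    intro i j
    induction j with
    | zero => intro h _; have : i = 0 := by omega
              subst this; exact le_rfl
    | succ n ih =>
      intro h hs'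
      rcases Nat.lt_or_ge i (n + 1) with h' | h'
      · exact le_trans (ih (by omega) (by omega)) (le_of_lt (hr n hs'))
      · have : i = n + 1 := by omega
        subst this; exact le_rfl
  -- order of v
  have horder : addOrderOf v = p ^ r (s - 1) := by
    have h1 : (p ^ r (s - 1)) • v = 0 := by
      funext i
      rcases i with ⟨i, his⟩
      show (p ^ r (s - 1)) • ((p ^ (k i - r i) : ℕ) : ZMod (p ^ k i)) = 0
      rw [nsmul_eq_mul, ← Nat.cast_mul, ← pow_add, ZMod.natCast_eq_zero_iff]
      apply pow_dvd_pow
      have := hrmono i (s - 1) (by omega) (by omega)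
      have := hrk i his
      omega
    have h2 : addOrderOf v ∣ p ^ r (s - 1) := addOrderOf_dvd_of_nsmul_eq_zero h1
    rcases (Nat.dvd_prime_pow hp).mp h2 with ⟨a, ha, hao⟩
    rcases Nat.lt_or_ge a (r (s - 1)) with hlt | hge
    · exfalso
      have h3 : (p ^ (r (s - 1) - 1)) • v = 0 := by
        apply addOrderOf_dvd_iff_nsmul_eq_zero.mp
        rw [hao]
        exact pow_dvd_pow p (by omega)
      have h4 := congrFun h3 ⟨s - 1, by omega⟩
      have h5 : ((p : ZMod (p ^ k (s - 1)))) ^ (r (s - 1) - 1) *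
          (p : ZMod (p ^ k (s - 1))) ^ (k (s - 1) - r (s - 1)) = 0 := by
        simpa [hv, nsmul_eq_mul] using h4
      rw [← pow_add, ← Nat.cast_pow, ZMod.natCast_eq_zero_iff,
        Nat.pow_dvd_pow_iff_le_right hp.one_lt] at h5
      have h6 := hrk (s - 1) (by omega)
      have h7 := hr0 (s - 1) (by omega)
      omega
    · have : a = r (s - 1) := by omega
      rw [hao, this]
  -- cardinalities
  have hGcard : Nat.card (∀ i : Fin s, ZMod (p ^ k i.1)) =
      p ^ (∑ i ∈ Finset.range s, k i) := by
    rw [Nat.card_pi]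
    simp only [Nat.card_zmod]
    rw [Finset.prod_pow_eq_pow_sum, ← Fin.sum_univ_eq_sum_range]
  have hHcard : Nat.card (∀ i : Fin s, ZMod (p ^ Stmt7Aux.M k r i.1)) =
      p ^ (∑ i ∈ Finset.range s, Stmt7Aux.M k r i) := by
    rw [Nat.card_pi]
    simp only [Nat.card_zmod]
    rw [Finset.prod_pow_eq_pow_sum, ← Fin.sum_univ_eq_sum_range]
  have hsum : ∑ i ∈ Finset.range s, k i =
      r (s - 1) + ∑ i ∈ Finset.range s, Stmt7Aux.M k r i := by
    suffices h : ∀ n, 1 ≤ n → n ≤ s →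
        (∑ i ∈ Finset.range n, k i) = r (n - 1) + ∑ i ∈ Finset.range n, Stmt7Aux.M k r i from
      h s (by omega) le_rfl
    intro n
    induction n with
    | zero => omega
    | succ n ih =>
      intro _ hns
      rcases Nat.eq_zero_or_pos n with rfl | hn
      · simp only [Finset.sum_range_succ, Finset.sum_range_zero]
        have h0 : Stmt7Aux.M k r 0 = k 0 - r 0 := if_pos rfl
        have h1 : r (0 + 1 - 1) = r 0 := by norm_num
        have := hrk 0 (by omega)
        omega
      · rw [Finset.sum_range_succ, Finset.sum_range_succ, ih (by omega) (by omega)]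
        have hMn : Stmt7Aux.M k r n = k n - r n + r (n - 1) := if_neg (by omega)
        have h1 := hrk n (by omega)
        have hn1 : n - 1 + 1 = n := by omega
        have h2 : r (n - 1) < r n := by
          have := hr (n - 1) (by omega); rwa [hn1] at this
        have h3 : r (n + 1 - 1) = r n := by rw [Nat.add_sub_cancel]
        omega
  -- first isomorphism theorem
  have e := QuotientAddGroup.quotientKerEquivOfSurjective ψ hsurj
  have hcard1 : Nat.card (∀ i : Fin s, ZMod (p ^ k i.1)) =
      Nat.card ((∀ i : Fin s, ZMod (p ^ k i.1)) ⧸ ψ.ker) * Nat.card ψ.ker :=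
    AddSubgroup.card_eq_card_quotient_mul_card_addSubgroup ψ.ker
  have hcard2 : Nat.card ((∀ i : Fin s, ZMod (p ^ k i.1)) ⧸ ψ.ker) =
      p ^ (∑ i ∈ Finset.range s, Stmt7Aux.M k r i) := by
    rw [Nat.card_congr e.toEquiv, hHcard]
  have hkercard : Nat.card ψ.ker = p ^ r (s - 1) := by
    have hpos : 0 < p ^ (∑ i ∈ Finset.range s, Stmt7Aux.M k r i) := pow_pos hp.pos _
    rw [hGcard, hcard2, hsum, pow_add] at hcard1
    have h' : (p ^ (∑ i ∈ Finset.range s, Stmt7Aux.M k r i)) * Nat.card ψ.ker =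
        (p ^ (∑ i ∈ Finset.range s, Stmt7Aux.M k r i)) * p ^ r (s - 1) := by
      rw [← hcard1]; ring
    exact Nat.eq_of_mul_eq_mul_left hpos h'
  have hkereq : AddSubgroup.zmultiples v = ψ.ker := by
    apply AddSubgroup.eq_of_le_of_card_ge hker_le
    rw [hkercard, Nat.card_zmultiples, horder]
    
  exact ⟨(QuotientAddGroup.quotientAddEquivOfEq hkereq).trans e⟩
end

section
/- Let p be a prime, s ≥ 2, l ≥ 1 integers, and let k₁ < ⋯ < k_s, 0 < r₁ < ⋯ < r_s be integers with r_i ≤ k_i, k_i − r_i < k_{i+1} − r_{i+1}, and k_s − r_s < l. Then the quotient of ℤ/p^{k₁}ℤ ⊕ ⋯ ⊕ ℤ/p^{k_s}ℤ ⊕ ℤ by the cyclic subgroup generated by (p^{k₁−r₁}, …, p^{k_s−r_s}, p^l) is isomorphic to ℤ/p^{k₁−r₁}ℤ ⊕ (⊕_{i=2}^{s} ℤ/p^{k_i−r_i+r_{i−1}}ℤ) ⊕ ℤ/p^{l+r_s}ℤ. -/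
private def mulCastZMod (n m : ℕ) (c : ℤ) (h : (m : ℤ) ∣ c * n) : ZMod n →+ ZMod m :=
  ZMod.lift n ⟨(Int.castAddHom (ZMod m)).comp (AddMonoidHom.mulLeft c), by
    simpa using (ZMod.intCast_zmod_eq_zero_iff_dvd (c * n) m).mpr h⟩

private lemma mulCastZMod_intCast (n m : ℕ) (c : ℤ) (h : (m : ℤ) ∣ c * n) (x : ℤ) :
    mulCastZMod n m c h ((x : ℤ) : ZMod n) = ((c * x : ℤ) : ZMod m) := by
  simp [mulCastZMod, ZMod.lift_coe]

private lemma pow_sub_cancel (q : ℤ) (A B : ℕ) (h : B ≤ A) :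
    q ^ A + -q ^ (A - B) * q ^ B = 0 := by
  rw [neg_mul, ← pow_add, Nat.sub_add_cancel h]; ring

private def bigPhi (p s : ℕ) (hs0 : 0 < s) (k : ℕ → ℕ) (M : Fin s → ℕ) (C : Fin s → ℤ)
    (cl : ℤ) (ml : ℕ)
    (hMk : ∀ i : Fin s, p ^ M i ∣ p ^ k i.1)
    (hC : ∀ i : Fin s, ((p : ℤ) ^ M i) ∣ C i * (p : ℤ) ^ k (i.1 - 1))
    (hcl : ((p : ℤ) ^ ml) ∣ cl * (p : ℤ) ^ k (s - 1)) :
    ((∀ i : Fin s, ZMod (p ^ k i.1)) × ℤ) →+ ((∀ i : Fin s, ZMod (p ^ M i)) × ZMod (p ^ ml)) :=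
  AddMonoidHom.mk' (fun x =>
    (fun i => ZMod.castHom (hMk i) (ZMod (p ^ M i)) (x.1 i) +
      mulCastZMod (p ^ k (i.1 - 1)) (p ^ M i) (C i) (by exact_mod_cast hC i)
        (x.1 ⟨i.1 - 1, lt_of_le_of_lt (Nat.sub_le _ _) i.2⟩),
     (x.2 : ZMod (p ^ ml)) +
      mulCastZMod (p ^ k (s - 1)) (p ^ ml) cl (by exact_mod_cast hcl)
        (x.1 ⟨s - 1, Nat.sub_lt hs0 one_pos⟩)))
    (by
      intro a b
      refine Prod.ext (funext fun i => ?_) ?_ <;>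
        simp [Prod.fst_add, Prod.snd_add, Pi.add_apply, map_add] <;> ring)

private lemma bigPhi_apply (p s : ℕ) (hs0 : 0 < s) (k : ℕ → ℕ) (M : Fin s → ℕ) (C : Fin s → ℤ)
    (cl : ℤ) (ml : ℕ) (hMk : ∀ i : Fin s, p ^ M i ∣ p ^ k i.1)
    (hC : ∀ i : Fin s, ((p : ℤ) ^ M i) ∣ C i * (p : ℤ) ^ k (i.1 - 1))
    (hcl : ((p : ℤ) ^ ml) ∣ cl * (p : ℤ) ^ k (s - 1)) (x : ℕ → ℤ) (n : ℤ) :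
    bigPhi p s hs0 k M C cl ml hMk hC hcl ((fun i => ((x i.1 : ℤ) : ZMod (p ^ k i.1))), n) =
      ((fun i => ((x i.1 + C i * x (i.1 - 1) : ℤ) : ZMod (p ^ M i))),
        ((n + cl * x (s - 1) : ℤ) : ZMod (p ^ ml))) := by
  refine Prod.ext (funext fun i => ?_) ?_ <;>
    simp only [bigPhi, AddMonoidHom.mk'_apply, mulCastZMod_intCast, map_intCast] <;>
    push_cast <;> ring

/-- With `p` prime, `s ≥ 2`, `l ≥ 1`, `kᵢ, rᵢ` as in the normal form
(`0 < rᵢ ≤ kᵢ`, `kᵢ` increasing, `rᵢ` increasing, `kᵢ − rᵢ` strictly increasing,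
`k_s − r_s < l`), the quotient of `ℤ/p^{k₁} ⊕ ⋯ ⊕ ℤ/p^{k_s} ⊕ ℤ` by the cyclic subgroup
generated by `(p^{k₁−r₁}, …, p^{k_s−r_s}, p^l)` is isomorphic to
`ℤ/p^{k₁−r₁} ⊕ (⊕_{i=2}^s ℤ/p^{kᵢ−rᵢ+rᵢ₋₁}) ⊕ ℤ/p^{l+r_s}`. -/
theorem stmt8 {p : ℕ} (hp : p.Prime) (s l : ℕ) (hs : 2 ≤ s) (hl : 1 ≤ l) (k r : ℕ → ℕ)
    (hr0 : ∀ i < s, 0 < r i) (hrk : ∀ i < s, r i ≤ k i)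
    (hk : ∀ i, i + 1 < s → k i < k (i + 1))
    (hr : ∀ i, i + 1 < s → r i < r (i + 1))
    (hkr : ∀ i, i + 1 < s → k i - r i < k (i + 1) - r (i + 1))
    (hlast : k (s - 1) - r (s - 1) < l) :
    Nonempty ((((∀ i : Fin s, ZMod (p ^ k i.1)) × ℤ) ⧸
        AddSubgroup.zmultiples
          (((fun i : Fin s => ((p ^ (k i.1 - r i.1) : ℕ) : ZMod (p ^ k i.1))), (p : ℤ) ^ l) :
            (∀ i : Fin s, ZMod (p ^ k i.1)) × ℤ)) ≃+
      ((∀ i : Fin s, ZMod (p ^ (if i.1 = 0 then k 0 - r 0 else k i.1 - r i.1 + r (i.1 - 1)))) ×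
        ZMod (p ^ (l + r (s - 1))))) := by
  classical
  have hs0 : 0 < s := lt_of_lt_of_le two_pos hs
  have hs1 : s - 1 < s := Nat.sub_lt hs0 one_pos
  have hpz : (p : ℤ) ≠ 0 := by exact_mod_cast hp.ne_zero
  have hrmono : ∀ i j, i ≤ j → j < s → r i ≤ r j := by
    intro i j hij hjs
    induction j with
    | zero => exact Nat.le_zero.mp hij ▸ le_rfl
    | succ j ih =>
      rcases Nat.eq_or_lt_of_le hij with h | h
      · exact h ▸ le_rfl
      · exact le_trans (ih (Nat.lt_succ_iff.mp h) (lt_trans (Nat.lt_succ_self j) hjs))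
          (hr j hjs).le
  -- divisibility hypotheses for `bigPhi`
  have hMk : ∀ i : Fin s,
      p ^ (if i.1 = 0 then k 0 - r 0 else k i.1 - r i.1 + r (i.1 - 1)) ∣ p ^ k i.1 := by
    intro i
    apply pow_dvd_pow
    by_cases h : i.1 = 0
    · simp only [if_pos h]
      exact h ▸ Nat.sub_le _ _
    · rw [if_neg h]
      obtain ⟨j, hj⟩ := Nat.exists_eq_succ_of_ne_zero h
      have hj1 : j + 1 < s := by have := i.2; omega
      have h1 := hr j hj1
      have h2 := hrk i.1 i.2
      rw [hj] at h2 ⊢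
      simp only [Nat.succ_sub_one, Nat.succ_eq_add_one] at *
      omega
  have hC : ∀ i : Fin s,
      ((p : ℤ) ^ (if i.1 = 0 then k 0 - r 0 else k i.1 - r i.1 + r (i.1 - 1))) ∣
        (if i.1 = 0 then (0 : ℤ)
          else -((p : ℤ) ^ ((k i.1 - r i.1) - (k (i.1 - 1) - r (i.1 - 1))))) *
          (p : ℤ) ^ k (i.1 - 1) := by
    intro i
    by_cases h : i.1 = 0
    · simp only [if_pos h, zero_mul]; exact dvd_zero _
    · rw [if_neg h, if_neg h]
      obtain ⟨j, hj⟩ := Nat.exists_eq_succ_of_ne_zero h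
      have hj1 : j + 1 < s := by have := i.2; omega
      have hjs : j < s := by omega
      rw [neg_mul, dvd_neg, ← pow_add]
      apply pow_dvd_pow
      have h1 := hkr j hj1
      have h2 := hrk j hjs
      have h3 := hrk (j + 1) hj1
      have h4 := hr j hj1
      rw [hj]
      simp only [Nat.succ_sub_one, Nat.succ_eq_add_one] at *
      omega
  have hcl : ((p : ℤ) ^ (l + r (s - 1))) ∣
      (-((p : ℤ) ^ (l - (k (s - 1) - r (s - 1))))) * (p : ℤ) ^ k (s - 1) := by
    rw [neg_mul, dvd_neg, ← pow_add]
    apply pow_dvd_pow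
    have h2 := hrk (s - 1) hs1
    omega
  set Φ := bigPhi p s hs0 k
      (fun i : Fin s => if i.1 = 0 then k 0 - r 0 else k i.1 - r i.1 + r (i.1 - 1))
      (fun i : Fin s => if i.1 = 0 then (0 : ℤ)
        else -((p : ℤ) ^ ((k i.1 - r i.1) - (k (i.1 - 1) - r (i.1 - 1)))))
      (-((p : ℤ) ^ (l - (k (s - 1) - r (s - 1))))) (l + r (s - 1)) hMk hC hcl with hPhi
  set g : (∀ i : Fin s, ZMod (p ^ k i.1)) × ℤ :=
    (((fun i : Fin s => ((p ^ (k i.1 - r i.1) : ℕ) : ZMod (p ^ k i.1))), (p : ℤ) ^ l)) with hgdef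
  -- g is in the kernel
  have hgker : g ∈ Φ.ker := by
    rw [AddMonoidHom.mem_ker]
    have hgeq : g = ((fun i : Fin s => (((p : ℤ) ^ (k i.1 - r i.1) : ℤ) : ZMod (p ^ k i.1))),
        (p : ℤ) ^ l) := by
      rw [hgdef]
      refine Prod.ext (funext fun i => ?_) rfl
      push_cast
      rfl
    have happ := bigPhi_apply p s hs0 k _ _ _ _ hMk hC hcl
      (fun j => (p : ℤ) ^ (k j - r j)) ((p : ℤ) ^ l)
    rw [hgeq, hPhi, happ]
    refine Prod.ext (funext fun i => ?_) ?_
    · simp only [Prod.fst_zero, Pi.zero_apply]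
      refine (ZMod.intCast_zmod_eq_zero_iff_dvd _ _).mpr ?_
      by_cases h : i.1 = 0
      · simp [h, Nat.cast_pow]
      · rw [if_neg h, if_neg h]
        push_cast
        obtain ⟨j, hj⟩ := Nat.exists_eq_succ_of_ne_zero h
        have hj1 : j + 1 < s := by have := i.2; omega
        rw [hj]
        simp only [Nat.succ_sub_one, Nat.succ_eq_add_one] at *
        rw [pow_sub_cancel (p : ℤ) _ _ (hkr j hj1).le]
        exact dvd_zero _
    · simp only [Prod.snd_zero]
      rw [pow_sub_cancel (p : ℤ) _ _ hlast.le]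
      exact Int.cast_zero
  -- kernel is contained in the multiples of g
  have hker_le : Φ.ker ≤ AddSubgroup.zmultiples g := by
    rintro ⟨x, n⟩ hmem
    rw [AddMonoidHom.mem_ker] at hmem
    obtain ⟨X, hxX⟩ : ∃ X : ℕ → ℤ, x = fun i : Fin s => ((X i.1 : ℤ) : ZMod (p ^ k i.1)) := by
      refine ⟨fun j => if h : j < s then (ZMod.cast (x ⟨j, h⟩) : ℤ) else 0, funext fun i => ?_⟩
      beta_reduce
      rw [dif_pos i.2]
      exact (ZMod.intCast_zmod_cast (x i)).symm
    have happ := bigPhi_apply p s hs0 k _ _ _ _ hMk hC hcl X n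
    rw [hxX, hPhi, happ] at hmem
    rw [Prod.ext_iff] at hmem
    obtain ⟨hm1, hm2⟩ := hmem
    simp only [Prod.fst_zero, Prod.snd_zero] at hm1 hm2
    have E0 : (p : ℤ) ^ (k 0 - r 0) ∣ X 0 := by
      have h1 := congrFun hm1 ⟨0, hs0⟩
      simp only [Pi.zero_apply] at h1
      have h2 := (ZMod.intCast_zmod_eq_zero_iff_dvd _ _).mp h1
      simpa using h2
    have Ei : ∀ j, j + 1 < s → (p : ℤ) ^ (k (j + 1) - r (j + 1) + r j) ∣
        X (j + 1) + -(p : ℤ) ^ ((k (j + 1) - r (j + 1)) - (k j - r j)) * X j := by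
      intro j hj
      have h1 := congrFun hm1 ⟨j + 1, hj⟩
      simp only [Pi.zero_apply] at h1
      have h2 := (ZMod.intCast_zmod_eq_zero_iff_dvd _ _).mp h1
      simpa using h2
    have El : (p : ℤ) ^ (l + r (s - 1)) ∣
        n + -(p : ℤ) ^ (l - (k (s - 1) - r (s - 1))) * X (s - 1) := by
      have h2 := (ZMod.intCast_zmod_eq_zero_iff_dvd _ _).mp hm2
      simpa using h2
    have hA : ∀ j, j < s → (p : ℤ) ^ (k j - r j) ∣ X j := by
      intro j
      induction j with
      | zero => intro _; exact E0
      | succ j ih =>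
        intro hj
        have hjs : j < s := by omega
        obtain ⟨u, hu⟩ := Ei j hj
        obtain ⟨v, hv⟩ := ih hjs
        have hXj : X (j + 1) = (p : ℤ) ^ (k (j + 1) - r (j + 1) + r j) * u +
            (p : ℤ) ^ ((k (j + 1) - r (j + 1)) - (k j - r j)) * X j := by linarith
        have he2 : (k (j + 1) - r (j + 1)) - (k j - r j) + (k j - r j) =
            k (j + 1) - r (j + 1) := by
          have := hkr j hj; omega
        rw [hXj, hv, ← mul_assoc, ← pow_add, he2]
        exact dvd_add ((pow_dvd_pow _ (Nat.le_add_right _ _)).mul_right u) (dvd_mul_right _ v)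
    have hXt : ∀ j, j < s → X j = (p : ℤ) ^ (k j - r j) * (X j / (p : ℤ) ^ (k j - r j)) :=
      fun j hj => (Int.mul_ediv_cancel' (hA j hj)).symm
    have hB : ∀ j, j + 1 < s → (p : ℤ) ^ (r j) ∣
        X (j + 1) / (p : ℤ) ^ (k (j + 1) - r (j + 1)) - X j / (p : ℤ) ^ (k j - r j) := by
      intro j hj
      have hjs : j < s := by omega
      have he2 : (k (j + 1) - r (j + 1)) - (k j - r j) + (k j - r j) =
          k (j + 1) - r (j + 1) := by
        have := hkr j hj; omega
      have key : (p : ℤ) ^ (k (j + 1) - r (j + 1)) *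
          (X (j + 1) / (p : ℤ) ^ (k (j + 1) - r (j + 1)) - X j / (p : ℤ) ^ (k j - r j)) =
          X (j + 1) + -(p : ℤ) ^ ((k (j + 1) - r (j + 1)) - (k j - r j)) * X j := by
        rw [mul_sub, ← hXt (j + 1) hj]
        have c3 : (p : ℤ) ^ (k (j + 1) - r (j + 1)) =
            (p : ℤ) ^ ((k (j + 1) - r (j + 1)) - (k j - r j)) * (p : ℤ) ^ (k j - r j) := by
          rw [← pow_add, he2]
        rw [c3, mul_assoc, ← hXt j hjs]
        ring
      have H := Ei j hj
      rw [← key, pow_add] at H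
      exact (mul_dvd_mul_iff_left (pow_ne_zero _ hpz)).mp H
    obtain ⟨w0, hw0⟩ := El
    have c2 := hXt (s - 1) hs1
    set tN := X (s - 1) / (p : ℤ) ^ (k (s - 1) - r (s - 1)) + (p : ℤ) ^ (r (s - 1)) * w0 with htN
    have hn : n = (p : ℤ) ^ l * tN := by
      have c3 : (p : ℤ) ^ (l - (k (s - 1) - r (s - 1))) * (p : ℤ) ^ (k (s - 1) - r (s - 1)) =
          (p : ℤ) ^ l := by
        rw [← pow_add]; congr 1; omega
      have c4 : (p : ℤ) ^ (l + r (s - 1)) = (p : ℤ) ^ l * (p : ℤ) ^ (r (s - 1)) := pow_add _ _ _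
      have h5 : n = (p : ℤ) ^ (l + r (s - 1)) * w0 +
          (p : ℤ) ^ (l - (k (s - 1) - r (s - 1))) * X (s - 1) := by linarith
      calc n = (p : ℤ) ^ (l + r (s - 1)) * w0 +
            (p : ℤ) ^ (l - (k (s - 1) - r (s - 1))) *
            ((p : ℤ) ^ (k (s - 1) - r (s - 1)) *
              (X (s - 1) / (p : ℤ) ^ (k (s - 1) - r (s - 1)))) := by
            rw [← c2]; exact h5
        _ = (p : ℤ) ^ l * tN := by rw [c4, ← mul_assoc, c3, htN]; ring
    have hchain : ∀ i j, i ≤ j → j < s → (p : ℤ) ^ (r i) ∣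
        X j / (p : ℤ) ^ (k j - r j) - X i / (p : ℤ) ^ (k i - r i) := by
      intro i j hij hjs
      induction j with
      | zero =>
        have h0 : i = 0 := Nat.le_zero.mp hij
        rw [h0]; simp
      | succ j ih =>
        rcases Nat.eq_or_lt_of_le hij with h | h
        · rw [h]; simp
        · have hij' : i ≤ j := Nat.lt_succ_iff.mp h
          have hjs' : j < s := by omega
          have d1 := hB j hjs
          have d2 := ih hij' hjs'
          have e5 : X (j + 1) / (p : ℤ) ^ (k (j + 1) - r (j + 1)) -
              X i / (p : ℤ) ^ (k i - r i) =
              (X (j + 1) / (p : ℤ) ^ (k (j + 1) - r (j + 1)) -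
                X j / (p : ℤ) ^ (k j - r j)) +
              (X j / (p : ℤ) ^ (k j - r j) - X i / (p : ℤ) ^ (k i - r i)) := by ring
          rw [e5]
          exact dvd_add (dvd_trans (pow_dvd_pow _ (hrmono i j hij' hjs')) d1) d2
    have hD : ∀ i, i < s → (p : ℤ) ^ (r i) ∣ X i / (p : ℤ) ^ (k i - r i) - tN := by
      intro i hi
      have h1 := hchain i (s - 1) (by omega) hs1
      have h2 : (p : ℤ) ^ (r i) ∣ (p : ℤ) ^ (r (s - 1)) * w0 :=
        (pow_dvd_pow _ (hrmono i (s - 1) (by omega) hs1)).mul_right w0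
      have e6 : X i / (p : ℤ) ^ (k i - r i) - tN =
          -(X (s - 1) / (p : ℤ) ^ (k (s - 1) - r (s - 1)) - X i / (p : ℤ) ^ (k i - r i)) -
          (p : ℤ) ^ (r (s - 1)) * w0 := by rw [htN]; ring
      rw [e6]
      exact dvd_sub (dvd_neg.mpr h1) h2
    have hfin : ((x, n) : (∀ i : Fin s, ZMod (p ^ k i.1)) × ℤ) = tN • g := by
      rw [hgdef, Prod.smul_mk]
      refine Prod.ext (funext fun i => ?_) ?_
      · rw [hxX]
        simp only [Pi.smul_apply]
        have e1 : tN • ((p ^ (k i.1 - r i.1) : ℕ) : ZMod (p ^ k i.1)) =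
            ((tN * (p : ℤ) ^ (k i.1 - r i.1) : ℤ) : ZMod (p ^ k i.1)) := by
          rw [zsmul_eq_mul]; push_cast; ring
        rw [e1, ZMod.intCast_eq_intCast_iff_dvd_sub]
        obtain ⟨d, hd⟩ := hD i.1 i.2
        have c5 := hXt i.1 i.2
        have e4 : tN * (p : ℤ) ^ (k i.1 - r i.1) - X i.1 =
            -((p : ℤ) ^ (k i.1 - r i.1) * ((p : ℤ) ^ (r i.1) * d)) := by
          have e7 : X i.1 / (p : ℤ) ^ (k i.1 - r i.1) = tN + (p : ℤ) ^ (r i.1) * d := by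
            linarith
          calc tN * (p : ℤ) ^ (k i.1 - r i.1) - X i.1
              = tN * (p : ℤ) ^ (k i.1 - r i.1) -
                (p : ℤ) ^ (k i.1 - r i.1) * (X i.1 / (p : ℤ) ^ (k i.1 - r i.1)) := by
                rw [← c5]
            _ = -((p : ℤ) ^ (k i.1 - r i.1) * ((p : ℤ) ^ (r i.1) * d)) := by rw [e7]; ring
        rw [e4, ← mul_assoc, ← pow_add]
        have e8 : k i.1 - r i.1 + r i.1 = k i.1 := by have := hrk i.1 i.2; omega
        rw [e8]
        push_cast
        exact dvd_neg.mpr (dvd_mul_right _ d)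
      · simp only [smul_eq_mul]
        rw [hn]; ring
    rw [hfin]
    exact AddSubgroup.zsmul_mem _ (AddSubgroup.mem_zmultiples g) tN
  -- surjectivity
  have hsurj : Function.Surjective Φ := by
    rintro ⟨y, w⟩
    obtain ⟨Y, hY⟩ : ∃ Y : ℕ → ℤ, ∀ (j : ℕ) (h : j < s),
        ((Y j : ℤ) : ZMod (p ^ (if j = 0 then k 0 - r 0 else k j - r j + r (j - 1)))) =
          y ⟨j, h⟩ := by
      refine ⟨fun j => if h : j < s then (ZMod.cast (y ⟨j, h⟩) : ℤ) else 0, fun j h => ?_⟩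
      beta_reduce
      rw [dif_pos h]
      exact ZMod.intCast_zmod_cast _
    obtain ⟨X, hX0, hXs⟩ : ∃ X : ℕ → ℤ, X 0 = Y 0 ∧ ∀ j, X (j + 1) = Y (j + 1) +
        (p : ℤ) ^ ((k (j + 1) - r (j + 1)) - (k j - r j)) * X j :=
      ⟨fun j => Nat.rec (Y 0)
        (fun i xi => Y (i + 1) + (p : ℤ) ^ ((k (i + 1) - r (i + 1)) - (k i - r i)) * xi) j,
        rfl, fun j => rfl⟩
    refine ⟨((fun i => ((X i.1 : ℤ) : ZMod (p ^ k i.1))),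
      (ZMod.cast w : ℤ) + (p : ℤ) ^ (l - (k (s - 1) - r (s - 1))) * X (s - 1)), ?_⟩
    have happ := bigPhi_apply p s hs0 k _ _ _ _ hMk hC hcl X
      ((ZMod.cast w : ℤ) + (p : ℤ) ^ (l - (k (s - 1) - r (s - 1))) * X (s - 1))
    rw [hPhi, happ]
    refine Prod.ext (funext fun i => ?_) ?_
    · rcases i with ⟨iv, hlt⟩
      cases iv with
      | zero =>
        show ((X 0 + (0 : ℤ) * X (0 - 1) : ℤ) : ZMod (p ^ (k 0 - r 0))) = y ⟨0, hlt⟩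
        rw [zero_mul, add_zero, hX0]
        exact hY 0 hlt
      | succ j =>
        show ((X (j + 1) +
            (-((p : ℤ) ^ ((k (j + 1) - r (j + 1)) - (k j - r j)))) * X j : ℤ) :
            ZMod (p ^ (k (j + 1) - r (j + 1) + r j))) = y ⟨j + 1, hlt⟩
        have e : X (j + 1) +
            (-((p : ℤ) ^ ((k (j + 1) - r (j + 1)) - (k j - r j)))) * X j = Y (j + 1) := by
          rw [hXs j]; ring
        rw [e]
        exact hY (j + 1) hlt
    · have e : (ZMod.cast w : ℤ) + (p : ℤ) ^ (l - (k (s - 1) - r (s - 1))) * X (s - 1) +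
          (-((p : ℤ) ^ (l - (k (s - 1) - r (s - 1))))) * X (s - 1) = (ZMod.cast w : ℤ) := by
        ring
      show (((ZMod.cast w : ℤ) + (p : ℤ) ^ (l - (k (s - 1) - r (s - 1))) * X (s - 1) +
          (-((p : ℤ) ^ (l - (k (s - 1) - r (s - 1))))) * X (s - 1) : ℤ) :
          ZMod (p ^ (l + r (s - 1)))) = w
      rw [e]
      exact ZMod.intCast_zmod_cast w
  have hker : AddSubgroup.zmultiples g = Φ.ker :=
    le_antisymm (AddSubgroup.zmultiples_le_of_mem hgker) hker_le
  exact ⟨(QuotientAddGroup.quotientAddEquivOfEq hker).trans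
    (QuotientAddGroup.quotientKerEquivOfSurjective Φ hsurj)⟩
end

section
/- Let (G, G̃) and (H, H̃) be pairs of finite abelian p-groups satisfying condition (**), and let f ≥ 0, F ≥ 0 be integers with f − F even. Then G^f ⊕ G̃^{F+1} ⊕ (G ⊗ G̃)² ≅ H^f ⊕ H̃^{F+1} ⊕ (H ⊗ H̃)² if and only if (G, G̃) = (H, H̃). -/
/-!
A finite abelian `p`-group `A ≅ ⊕ᵢ ℤ/p^{eᵢ}` has `p^{∑ᵢ min(eᵢ, t)}` elements killed by `p^t`, and
`ℤ/p^a ⊗ ℤ/p^b ≅ ℤ/p^{min(a,b)}`. Counting `p^t`-torsion on both sides of the isomorphism and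
taking differences in `t` gives `f x + (F + 1) y + 2 x y = f x' + (F + 1) y' + 2 x' y'` for every
`t ≥ 1`, where `x, y, x', y'` are the numbers of cyclic factors of order at least `p^t` in
`G, G̃, H, H̃`. Condition (**) forces `x ≤ y ≤ x + 1` and `x' ≤ y' ≤ x' + 1`, and on such pairs
the left side is injective. Hence `G, H` and `G̃, H̃` have the same numbers of cyclic factors of
each order.
-/

open TensorProduct Finset

/-- Condition (**) for a pair of finite abelian `p`-groups `(G, G̃)`: either `G ≅ G̃`, or
`G ≅ N ⊕ ⊕ᵢ ℤ/p^{kᵢ}` and `G̃ ≅ N ⊕ ⊕ᵢ ℤ/p^{k̃ᵢ}` with strictly interleaving exponents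
`k₁ < k̃₁ < k₂ < k̃₂ < ⋯ < k_s < k̃_s` (so that the maximum lies on the `G̃` side, i.e.
`max (I(G̃)∖I(G)) ∪ {0} > max (I(G)∖I(G̃)) ∪ {0}`). -/
def DoubleStarPair (p : ℕ) (G Gt : Type*) [AddCommGroup G] [AddCommGroup Gt] : Prop :=
  Nonempty (G ≃+ Gt) ∨
    ∃ (m : ℕ) (nn : ℕ → ℕ) (s : ℕ) (k kt : ℕ → ℕ), 1 ≤ s ∧
      Nonempty (G ≃+ ((∀ i : Fin m, ZMod (p ^ nn i.1)) × (∀ i : Fin s, ZMod (p ^ k i.1)))) ∧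
      Nonempty (Gt ≃+ ((∀ i : Fin m, ZMod (p ^ nn i.1)) × (∀ i : Fin s, ZMod (p ^ kt i.1)))) ∧
      (∀ i < s, k i < kt i) ∧ ∀ i, i + 1 < s → kt i < k (i + 1)

namespace AddCommGroup

noncomputable def torsionCard (n : ℕ) (A : Type*) [AddCommGroup A] : ℕ :=
  Nat.card {x : A // n • x = 0}

variable {A B : Type*} [AddCommGroup A] [AddCommGroup B]

theorem torsionCard_congr (n : ℕ) (φ : A ≃+ B) : torsionCard n A = torsionCard n B :=
  Nat.card_congr <| φ.toEquiv.subtypeEquiv fun x => by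
    rw [AddEquiv.toEquiv_eq_coe, EquivLike.coe_coe, ← map_nsmul, AddEquiv.map_eq_zero_iff]

theorem torsionCard_prod (n : ℕ) : torsionCard n (A × B) = torsionCard n A * torsionCard n B := by
  simp only [torsionCard, ← Nat.card_prod]
  refine Nat.card_congr <| (Equiv.subtypeEquivRight fun x => ?_).trans Equiv.subtypeProdEquivProd
  simp [Prod.ext_iff]

theorem torsionCard_pi {ι : Type*} [Fintype ι] (n : ℕ) (M : ι → Type*)
    [∀ i, AddCommGroup (M i)] :
    torsionCard n (∀ i, M i) = ∏ i, torsionCard n (M i) := by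
  simp only [torsionCard, ← Nat.card_pi]
  refine Nat.card_congr <| (Equiv.subtypeEquivRight fun x => ?_).trans Equiv.subtypePiEquivPi
  simp [funext_iff]

theorem torsionCard_zmod (n k : ℕ) [NeZero n] : torsionCard k (ZMod n) = n.gcd k := by
  conv_rhs => rw [← Nat.card_zmod n, ← IsAddCyclic.card_nsmulAddMonoidHom_ker]
  rfl

end AddCommGroup

open AddCommGroup

theorem Nat.gcd_pow_pow (p a b : ℕ) : (p ^ a).gcd (p ^ b) = p ^ min a b := by
  rcases le_total a b with h | h
  · rw [min_eq_left h, Nat.gcd_eq_left (pow_dvd_pow p h)]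
  · rw [min_eq_right h, Nat.gcd_eq_right (pow_dvd_pow p h)]

noncomputable def ZMod.tensorEquivGcd (m n : ℕ) : ZMod m ⊗[ℤ] ZMod n ≃+ ZMod (m.gcd n) :=
  let I : ℕ → Ideal ℤ := fun k => Ideal.span {(k : ℤ)}
  have hmap : (I n).map (algebraMap ℤ (ℤ ⧸ I m)) = (I n).map (Ideal.Quotient.mk (I m)) := by
    congr 1
  have hsup : I m ⊔ I n = I (m.gcd n) := by
    rw [← Ideal.span_insert, ← span_gcd, ← Int.coe_gcd, Int.gcd_natCast_natCast]
  (TensorProduct.congr (Int.quotientSpanNatEquivZMod m).symm.toAddEquiv.toIntLinearEquiv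
      (Int.quotientSpanNatEquivZMod n).symm.toAddEquiv.toIntLinearEquiv).toAddEquiv.trans <|
    (Algebra.TensorProduct.quotIdealMapEquivTensorQuot (ℤ ⧸ I m) (I n)).symm.toAddEquiv.trans <|
    (Ideal.quotEquivOfEq hmap).toAddEquiv.trans <|
    (DoubleQuot.quotQuotEquivQuotSup (I m) (I n)).toAddEquiv.trans <|
    (Ideal.quotEquivOfEq hsup).toAddEquiv.trans (Int.quotientSpanNatEquivZMod _).toAddEquiv

noncomputable def piZModTensorEquiv {ι κ : Type*} [Fintype ι] [Fintype κ] [DecidableEq ι]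
    [DecidableEq κ] (m : ι → ℕ) (n : κ → ℕ) :
    (∀ i, ZMod (m i)) ⊗[ℤ] (∀ j, ZMod (n j)) ≃+ ∀ i j, ZMod ((m i).gcd (n j)) :=
  (TensorProduct.comm ℤ _ _).toAddEquiv.trans <|
    (TensorProduct.piRight ℤ ℤ _ fun i => ZMod (m i)).toAddEquiv.trans <|
      AddEquiv.piCongrRight fun i => (TensorProduct.comm ℤ _ _).toAddEquiv.trans <|
        (TensorProduct.piRight ℤ ℤ _ fun j => ZMod (n j)).toAddEquiv.trans <|
          AddEquiv.piCongrRight fun j => ZMod.tensorEquivGcd (m i) (n j)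

-- The pairs with `x ≤ y ≤ x + 1` are ordered by `x + y`, and the form increases strictly along it.
theorem injOn_linear_add_mul {a b c : ℕ} (hb : 0 < b) (hc : 0 < c) :
    Set.InjOn (fun q : ℕ × ℕ => a * q.1 + b * q.2 + c * (q.1 * q.2))
      {q | q.1 ≤ q.2 ∧ q.2 ≤ q.1 + 1} := by
  have hlt : ∀ x y x' y', x ≤ y → y ≤ x + 1 → x' ≤ y' → y' ≤ x' + 1 → x + y < x' + y' →
      a * x + b * y + c * (x * y) < a * x' + b * y' + c * (x' * y') := by
    intro x y x' y' _ _ _ _ hs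
    have hx : x ≤ x' := by omega
    have hy : y ≤ y' := by omega
    have hxy : x * y ≤ x' * y' := Nat.mul_le_mul hx hy
    rcases (show y < y' ∨ x < x' by omega) with hy' | hx'
    · nlinarith
    · have : x * y < x' * y' := Nat.mul_lt_mul_of_lt_of_le hx' hy (by omega)
      nlinarith
  rintro ⟨x, y⟩ ⟨h₁, h₂⟩ ⟨x', y'⟩ ⟨h₁', h₂'⟩ heq
  simp only at h₁ h₂ h₁' h₂' heq
  rcases lt_trichotomy (x + y) (x' + y') with hs | hs | hs
  · exact absurd heq (hlt x y x' y' h₁ h₂ h₁' h₂' hs).ne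
  · ext <;> simp only <;> omega
  · exact absurd heq (hlt x' y' x y h₁' h₂' h₁ h₂ hs).ne'

section Exponents

variable {ι κ : Type*} [Fintype ι] [Fintype κ]

def countGe (e : ι → ℕ) (t : ℕ) : ℕ := #{i | t ≤ e i}

def sumMin (e : ι → ℕ) (t : ℕ) : ℕ := ∑ i, min (e i) t

theorem sumMin_succ (e : ι → ℕ) (t : ℕ) : sumMin e (t + 1) = sumMin e t + countGe e (t + 1) := by
  have h i : min (e i) (t + 1) = min (e i) t + if t + 1 ≤ e i then 1 else 0 := by
    split_ifs <;> omega
  simp only [sumMin, countGe, card_filter, h, sum_add_distrib]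

theorem countGe_mono {e e' : ι → ℕ} (h : ∀ i, e i ≤ e' i) (t : ℕ) : countGe e t ≤ countGe e' t :=
  card_le_card fun i hi => by
    simp only [mem_filter, mem_univ, true_and] at hi ⊢
    exact hi.trans (h i)

theorem countGe_min_prod (e : ι → ℕ) (g : κ → ℕ) (t : ℕ) :
    countGe (fun x : ι × κ => min (e x.1) (g x.2)) t = countGe e t * countGe g t := by
  simp only [countGe, le_min_iff, ← card_product, ← filter_product, univ_product_univ]

theorem countGe_sum_elim (e : ι → ℕ) (g : κ → ℕ) (t : ℕ) :
    countGe (Sum.elim e g) t = countGe e t + countGe g t := by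
  simp only [countGe, card_filter, Fintype.sum_sum_type, Sum.elim_inl, Sum.elim_inr]
  rfl

theorem card_fiber_add_countGe (e : ι → ℕ) (a : ℕ) :
    Fintype.card {i // e i = a} + countGe e (a + 1) = countGe e a := by
  classical
  rw [Fintype.card_subtype, countGe, countGe, ← card_union_of_disjoint]
  · congr 1; ext i; simp only [mem_union, mem_filter, mem_univ, true_and]; omega
  · exact disjoint_filter.2 fun i _ h₁ h₂ => by omega

-- Shifting the index by one sends every entry of `kt` but the last to a larger entry of `k`.
theorem countGe_le_countGe_add_one {s : ℕ} {k kt : ℕ → ℕ} (h : ∀ i, i + 1 < s → kt i ≤ k (i + 1))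
    (t : ℕ) : countGe (fun i : Fin s => kt i) t ≤ countGe (fun i : Fin s => k i) t + 1 := by
  obtain _ | s := s
  · simp [countGe]
  simp only [countGe, card_filter, Fin.sum_univ_eq_sum_range (fun i => if t ≤ kt i then 1 else 0),
    Fin.sum_univ_eq_sum_range (fun i => if t ≤ k i then 1 else 0), sum_range_succ,
    sum_range_succ' (fun i => if t ≤ k i then 1 else 0)]
  have hshift : ∑ i ∈ range s, (if t ≤ kt i then 1 else 0) ≤
      ∑ i ∈ range s, (if t ≤ k (i + 1) then 1 else 0) := by
    refine sum_le_sum fun i hi => ?_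
    have := h i (by rw [mem_range] at hi; omega)
    split_ifs <;> omega
  split_ifs <;> omega

theorem torsionCard_pi_zmod_pow {p : ℕ} (hp : 0 < p) (e : ι → ℕ) (t : ℕ) :
    torsionCard (p ^ t) (∀ i, ZMod (p ^ e i)) = p ^ sumMin e t := by
  have (i : ι) : NeZero (p ^ e i) := ⟨(pow_pos hp _).ne'⟩
  simp only [torsionCard_pi, torsionCard_zmod, Nat.gcd_pow_pow, prod_pow_eq_pow_sum, sumMin]

theorem torsionCard_tensor_pi_zmod_pow {p : ℕ} (hp : 0 < p) (e : ι → ℕ) (g : κ → ℕ) (t : ℕ) :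
    torsionCard (p ^ t) ((∀ i, ZMod (p ^ e i)) ⊗[ℤ] (∀ j, ZMod (p ^ g j))) =
      p ^ sumMin (fun x : ι × κ => min (e x.1) (g x.2)) t := by
  classical
  have (i : ι) (j : κ) : NeZero ((p ^ e i).gcd (p ^ g j)) :=
    ⟨(Nat.gcd_pos_of_pos_left _ (pow_pos hp _)).ne'⟩
  simp only [torsionCard_congr _ (piZModTensorEquiv _ _), torsionCard_pi, torsionCard_zmod,
    Nat.gcd_pow_pow, prod_pow_eq_pow_sum, sumMin, Fintype.sum_prod_type]

theorem torsionCard_prod_pi_tensor {p : ℕ} (hp : 0 < p) {G Gt : Type*} [AddCommGroup G]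
    [AddCommGroup Gt] {e : ι → ℕ} {g : κ → ℕ} (ψ : G ≃+ ∀ i, ZMod (p ^ e i))
    (ψt : Gt ≃+ ∀ j, ZMod (p ^ g j)) (a b c t : ℕ) :
    torsionCard (p ^ t) ((Fin a → G) × (Fin b → Gt) × (Fin c → G ⊗[ℤ] Gt)) =
      p ^ (a * sumMin e t + b * sumMin g t +
        c * sumMin (fun x : ι × κ => min (e x.1) (g x.2)) t) := by
  have ψT := TensorProduct.congr ψ.toIntLinearEquiv ψt.toIntLinearEquiv
  simp only [torsionCard_prod, torsionCard_pi, prod_const, card_univ, Fintype.card_fin,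
    torsionCard_congr _ ψ, torsionCard_congr _ ψt, torsionCard_congr _ ψT.toAddEquiv,
    torsionCard_pi_zmod_pow hp, torsionCard_tensor_pi_zmod_pow hp, ← pow_mul, ← pow_add]
  ring_nf

theorem countGe_eq_of_sumMin_eq {a b c : ℕ} (hb : 0 < b) (hc : 0 < c) {e g : ι → ℕ}
    {e' g' : κ → ℕ} (hg : ∀ t, countGe e t ≤ countGe g t ∧ countGe g t ≤ countGe e t + 1)
    (hg' : ∀ t, countGe e' t ≤ countGe g' t ∧ countGe g' t ≤ countGe e' t + 1)
    (h : ∀ t, a * sumMin e t + b * sumMin g t +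
        c * sumMin (fun x : ι × ι => min (e x.1) (g x.2)) t =
      a * sumMin e' t + b * sumMin g' t + c * sumMin (fun x : κ × κ => min (e' x.1) (g' x.2)) t)
    (t : ℕ) : countGe e (t + 1) = countGe e' (t + 1) ∧ countGe g (t + 1) = countGe g' (t + 1) := by
  have hsucc := h (t + 1)
  simp only [sumMin_succ, countGe_min_prod] at hsucc
  have := h t
  exact Prod.ext_iff.1 <| injOn_linear_add_mul (a := a) hb hc
    (x₁ := (countGe e (t + 1), countGe g (t + 1))) (x₂ := (countGe e' (t + 1), countGe g' (t + 1)))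
    (hg (t + 1)) (hg' (t + 1)) (by simp only; linarith)

theorem exists_equiv_ne_zero_of_card_fiber_eq {e : ι → ℕ} {g : κ → ℕ}
    (h : ∀ a, Fintype.card {i // e i = a + 1} = Fintype.card {j // g j = a + 1}) :
    ∃ σ : {i // e i ≠ 0} ≃ {j // g j ≠ 0}, ∀ i, g (σ i) = e i := by
  classical
  let fiber : ∀ c, {i : {i // e i ≠ 0} // e i = c} ≃ {j : {j // g j ≠ 0} // g j = c}
    | 0 => @Equiv.equivOfIsEmpty _ _ ⟨fun i => i.1.2 i.2⟩ ⟨fun j => j.1.2 j.2⟩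
    | a + 1 => (Equiv.subtypeSubtypeEquivSubtype fun h => by omega).trans <|
        (Fintype.equivOfCardEq (h a)).trans
          (Equiv.subtypeSubtypeEquivSubtype fun h => by omega).symm
  exact ⟨Equiv.ofFiberEquiv fiber, Equiv.ofFiberEquiv_map fiber⟩

noncomputable def piZModPowEquivNeZero (p : ℕ) (e : ι → ℕ) :
    (∀ i, ZMod (p ^ e i)) ≃+ ∀ i : {i // e i ≠ 0}, ZMod (p ^ e i) := by
  classical
  have (i : {i // ¬e i ≠ 0}) : Subsingleton (ZMod (p ^ e i)) :=
    ZMod.subsingleton_iff.2 (by rw [not_not.1 i.2, pow_zero])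
  letI : Unique (∀ i : {i // ¬e i ≠ 0}, ZMod (p ^ e i)) := uniqueOfSubsingleton 0
  exact (RingEquiv.piEquivPiSubtypeProd _ _).toAddEquiv.trans AddEquiv.prodUnique

theorem nonempty_addEquiv_pi_zmod_pow_of_countGe_eq (p : ℕ) {e : ι → ℕ} {g : κ → ℕ}
    (h : ∀ t, countGe e (t + 1) = countGe g (t + 1)) :
    Nonempty ((∀ i, ZMod (p ^ e i)) ≃+ ∀ j, ZMod (p ^ g j)) := by
  obtain ⟨σ, hσ⟩ := exists_equiv_ne_zero_of_card_fiber_eq (e := e) (g := g) fun a => by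
    have := card_fiber_add_countGe e (a + 1)
    have := card_fiber_add_countGe g (a + 1)
    have := h a
    have := h (a + 1)
    omega
  exact ⟨(piZModPowEquivNeZero p e).trans <| (AddEquiv.piCongrRight fun i =>
    (ZMod.ringEquivCongr (congrArg (p ^ ·) (hσ i).symm)).toAddEquiv).trans <|
      (RingEquiv.piCongrLeft _ σ).toAddEquiv.trans (piZModPowEquivNeZero p g).symm⟩

end Exponents

theorem exists_addEquiv_pi_zmod_pow {p : ℕ} (hp : p.Prime) (A : Type*) [AddCommGroup A]
    [Finite A] (hA : ∀ x : A, ∃ j : ℕ, p ^ j • x = 0) :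
    ∃ (ι : Type) (_ : Fintype ι) (e : ι → ℕ), Nonempty (A ≃+ ∀ i, ZMod (p ^ e i)) := by
  classical
  obtain ⟨ι, hι, q, hq, e, ⟨φ⟩⟩ := AddCommGroup.equiv_directSum_zmod_of_finite A
  let ψ := φ.trans (DirectSum.linearEquivFunOnFintype ℤ ι _).toAddEquiv
  have hqe (i : ι) : q i ^ e i = p ^ e i := by
    rcases eq_or_ne (e i) 0 with he | he
    · rw [he, pow_zero, pow_zero]
    obtain ⟨j, hj⟩ := hA (ψ.symm (Pi.single i 1))
    have : ((p ^ j : ℕ) : ZMod (q i ^ e i)) = 0 := by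
      simpa [← nsmul_eq_mul] using congrFun (congrArg ψ hj) i
    rw [ZMod.natCast_eq_zero_iff] at this
    have hqp : q i ∣ p := (hq i).dvd_of_dvd_pow ((dvd_pow_self _ he).trans this)
    rw [(Nat.prime_dvd_prime_iff_eq (hq i) hp).1 hqp]
  exact ⟨ι, hι, e,
    ⟨ψ.trans (AddEquiv.piCongrRight fun i => (ZMod.ringEquivCongr (hqe i)).toAddEquiv)⟩⟩

theorem DoubleStarPair.exists_addEquiv_pi {p : ℕ} (hp : p.Prime) {G Gt : Type*}
    [AddCommGroup G] [AddCommGroup Gt] [Finite G] (hG : ∀ x : G, ∃ j : ℕ, p ^ j • x = 0)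
    (h : DoubleStarPair p G Gt) :
    ∃ (ι : Type) (_ : Fintype ι) (e et : ι → ℕ), Nonempty (G ≃+ ∀ i, ZMod (p ^ e i)) ∧
      Nonempty (Gt ≃+ ∀ i, ZMod (p ^ et i)) ∧
      ∀ t, countGe e t ≤ countGe et t ∧ countGe et t ≤ countGe e t + 1 := by
  rcases h with ⟨⟨χ⟩⟩ | ⟨m, nn, s, k, kt, -, ⟨φ⟩, ⟨φt⟩, hk, hkt⟩
  · obtain ⟨ι, hι, e, ⟨ψ⟩⟩ := exists_addEquiv_pi_zmod_pow hp G hG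
    exact ⟨ι, hι, e, e, ⟨ψ⟩, ⟨χ.symm.trans ψ⟩, fun t => ⟨le_rfl, Nat.le_succ _⟩⟩
  · let sumPi (k : ℕ → ℕ) := (LinearEquiv.sumPiEquivProdPi ℤ (Fin m) (Fin s)
      fun x => ZMod (p ^ Sum.elim (fun i : Fin m => nn i) (fun i : Fin s => k i) x)).toAddEquiv
    refine ⟨Fin m ⊕ Fin s, inferInstance, Sum.elim (fun i => nn i) (fun i => k i),
      Sum.elim (fun i => nn i) (fun i => kt i), ⟨φ.trans (sumPi k).symm⟩,
      ⟨φt.trans (sumPi kt).symm⟩, fun t => ?_⟩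
    have := countGe_mono (fun i : Fin s => (hk i i.2).le) t
    have := countGe_le_countGe_add_one (fun i hi => (hkt i hi).le) t
    simp only [countGe_sum_elim]
    omega

theorem stmt12_general {p : ℕ} (hp : p.Prime)
    (G Gt H Ht : Type) [AddCommGroup G] [AddCommGroup Gt] [AddCommGroup H] [AddCommGroup Ht]
    [Finite G] [Finite H]
    (hG : ∀ x : G, ∃ j : ℕ, p ^ j • x = 0)
    (hH : ∀ x : H, ∃ j : ℕ, p ^ j • x = 0)
    (f F : ℕ)
    (hstarG : DoubleStarPair p G Gt) (hstarH : DoubleStarPair p H Ht) :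
    Nonempty
      (((Fin f → G) × (Fin (F + 1) → Gt) × (Fin 2 → TensorProduct ℤ G Gt)) ≃+
        ((Fin f → H) × (Fin (F + 1) → Ht) × (Fin 2 → TensorProduct ℤ H Ht))) ↔
      (Nonempty (G ≃+ H) ∧ Nonempty (Gt ≃+ Ht)) := by
  constructor
  · rintro ⟨Φ⟩
    obtain ⟨ι, _, e, et, ⟨ψ⟩, ⟨ψt⟩, hband⟩ := hstarG.exists_addEquiv_pi hp hG
    obtain ⟨κ, _, b, bt, ⟨χ⟩, ⟨χt⟩, hband'⟩ := hstarH.exists_addEquiv_pi hp hH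
    have hsum (t : ℕ) : f * sumMin e t + (F + 1) * sumMin et t +
        2 * sumMin (fun x : ι × ι => min (e x.1) (et x.2)) t = f * sumMin b t +
          (F + 1) * sumMin bt t + 2 * sumMin (fun x : κ × κ => min (b x.1) (bt x.2)) t := by
      refine Nat.pow_right_injective hp.two_le ?_
      dsimp only
      rw [← torsionCard_prod_pi_tensor hp.pos ψ ψt, ← torsionCard_prod_pi_tensor hp.pos χ χt]
      exact torsionCard_congr _ Φ
    have hcount := countGe_eq_of_sumMin_eq (Nat.succ_pos F) two_pos hband hband' hsum
    obtain ⟨θ⟩ := nonempty_addEquiv_pi_zmod_pow_of_countGe_eq p fun t => (hcount t).1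
    obtain ⟨θt⟩ := nonempty_addEquiv_pi_zmod_pow_of_countGe_eq p fun t => (hcount t).2
    exact ⟨⟨ψ.trans (θ.trans χ.symm)⟩, ⟨ψt.trans (θt.trans χt.symm)⟩⟩
  · rintro ⟨⟨α⟩, ⟨β⟩⟩
    exact ⟨(AddEquiv.piCongrRight fun _ => α).prodCongr <|
      (AddEquiv.piCongrRight fun _ => β).prodCongr <| AddEquiv.piCongrRight fun _ =>
        (TensorProduct.congr α.toIntLinearEquiv β.toIntLinearEquiv).toAddEquiv⟩

/-- If `(G, G̃)` and `(H, H̃)` are pairs of finite abelian `p`-groups satisfying (**),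
`f ≥ 0`, `F ≥ 0` with `f − F` even, then
`G^f ⊕ G̃^{F+1} ⊕ (G ⊗ G̃)² ≅ H^f ⊕ H̃^{F+1} ⊕ (H ⊗ H̃)²` iff `(G, G̃) = (H, H̃)`. -/
theorem stmt12 {p : ℕ} (hp : p.Prime)
    (G Gt H Ht : Type) [AddCommGroup G] [AddCommGroup Gt] [AddCommGroup H] [AddCommGroup Ht]
    [Finite G] [Finite Gt] [Finite H] [Finite Ht]
    (hG : ∀ x : G, ∃ j : ℕ, p ^ j • x = 0) (hGt : ∀ x : Gt, ∃ j : ℕ, p ^ j • x = 0)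
    (hH : ∀ x : H, ∃ j : ℕ, p ^ j • x = 0) (hHt : ∀ x : Ht, ∃ j : ℕ, p ^ j • x = 0)
    (f F : ℕ) (hfF : Even ((f : ℤ) - (F : ℤ)))
    (hstarG : DoubleStarPair p G Gt) (hstarH : DoubleStarPair p H Ht) :
    Nonempty
      (((Fin f → G) × (Fin (F + 1) → Gt) × (Fin 2 → TensorProduct ℤ G Gt)) ≃+
        ((Fin f → H) × (Fin (F + 1) → Ht) × (Fin 2 → TensorProduct ℤ H Ht))) ↔
      (Nonempty (G ≃+ H) ∧ Nonempty (Gt ≃+ Ht)) :=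
  stmt12_general hp G Gt H Ht hG hH f F hstarG hstarH
end

section
/- Let G be a finitely generated abelian group, g₁, g₂ ∈ G with G/⟨g₁⟩ ≅ G/⟨g₂⟩. Then g₁ is a torsion element if and only if g₂ is a torsion element. -/
private lemma aux15 {G : Type*} [AddCommGroup G] [AddGroup.FG G] (g : G) :
    IsOfFinAddOrder g ↔
      Module.rank ℤ (G ⧸ AddSubgroup.zmultiples g) = Module.rank ℤ G := by
  have hfin : Module.Finite ℤ G := Module.Finite.iff_addGroup_fg.mpr ‹_›
  set N : Submodule ℤ G := AddSubgroup.toIntSubmodule (AddSubgroup.zmultiples g) with hN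
  have e : (G ⧸ AddSubgroup.zmultiples g) ≃+ (G ⧸ N) := AddEquiv.refl _
  have hr : Module.rank ℤ (G ⧸ AddSubgroup.zmultiples g) = Module.rank ℤ (G ⧸ N) :=
    e.toIntLinearEquiv.rank_eq
  rw [hr]
  constructor
  · intro hg
    apply rank_quotient_eq_of_le_torsion
    intro x hx
    obtain ⟨n, rfl⟩ := hx
    rw [Submodule.mem_torsion_iff]
    obtain ⟨m, hm, hmg⟩ := (isOfFinAddOrder_iff_nsmul_eq_zero).mp hg
    refine ⟨⟨(m : ℤ), mem_nonZeroDivisors_iff_ne_zero.mpr (by exact_mod_cast hm.ne')⟩, ?_⟩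
    simp only [Submonoid.mk_smul]
    rw [smul_comm]
    simp [natCast_zsmul, hmg]
  · intro hrank
    by_contra hg
    have hinj : Function.Injective (LinearMap.toSpanSingleton ℤ G g) := by
      have := injective_zsmul_iff_not_isOfFinAddOrder.mpr hg
      intro a b hab
      exact this hab
    have hrange : LinearMap.range (LinearMap.toSpanSingleton ℤ G g) = N := by
      ext x
      constructor
      · rintro ⟨n, rfl⟩; exact ⟨n, rfl⟩
      · rintro ⟨n, rfl⟩; exact ⟨n, rfl⟩
    have eq1 : Module.rank ℤ N = 1 := by
      have := lift_rank_range_of_injective (LinearMap.toSpanSingleton ℤ G g) hinj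
      rw [hrange, Module.rank_self] at this
      simpa using this
    have key := rank_quotient_add_rank_of_isDomain N
    rw [eq1, hrank] at key
    have ha : Module.rank ℤ G < Cardinal.aleph0 := Module.rank_lt_aleph0 ℤ G
    have := congrArg Cardinal.toNat key
    rw [Cardinal.toNat_add ha Cardinal.one_lt_aleph0] at this
    simp at this

/-- For a finitely generated abelian group `G` and `g₁, g₂ ∈ G` with
`G ⧸ ⟨g₁⟩ ≅ G ⧸ ⟨g₂⟩`, `g₁` is torsion iff `g₂` is torsion. -/
theorem stmt15 {G : Type*} [AddCommGroup G] [AddGroup.FG G] (g₁ g₂ : G)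
    (h : Nonempty ((G ⧸ AddSubgroup.zmultiples g₁) ≃+ (G ⧸ AddSubgroup.zmultiples g₂))) :
    IsOfFinAddOrder g₁ ↔ IsOfFinAddOrder g₂ := by
  obtain ⟨e⟩ := h
  have heq : Module.rank ℤ (G ⧸ AddSubgroup.zmultiples g₁)
      = Module.rank ℤ (G ⧸ AddSubgroup.zmultiples g₂) := e.toIntLinearEquiv.rank_eq
  rw [aux15 g₁, aux15 g₂, heq]
end

section
/- Let G be a finite abelian p-group with cyclic decomposition of exponents I(G) = {n₁,…,n_{t−s}, k₁,…,k_s}, and let g ∈ G be an element of order p^l put in the normal form g = (0,…,0, p^{k₁−r₁},…, p^{k_s−r_s}) with r_s = l and the conditions of the normal form (k_i increasing, r_i increasing, k_i − r_i strictly increasing, 0 ≤ k₁ − r₁). Then I(G) ∩ I(G/⟨g⟩) = {n₁, …, n_{t−s}}, i.e., the common part of the exponent multisets of G and G/⟨g⟩ consists exactly of the exponents not involved in the normal form of g. -/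
/-!
With `mᵢ = kᵢ - rᵢ + rᵢ₋₁` (and `m₀ = k₀ - r₀`), the map
`x ↦ (x₀ mod p^{m₀}, (xᵢ - p^{dᵢ} xᵢ₋₁ mod p^{mᵢ})ᵢ)`, where `dᵢ = (kᵢ - rᵢ) - (kᵢ₋₁ - rᵢ₋₁)`,
is a well-defined homomorphism `⊕ ℤ/p^{kᵢ} → ⊕ ℤ/p^{mᵢ}` because `kᵢ₋₁ + dᵢ = mᵢ`, and it kills
`g`. It is bidiagonal with surjective diagonal, hence surjective, and since `∑ mᵢ + l = ∑ kᵢ`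
telescopes, its kernel has order `p^l = |⟨g⟩|`. So `G/⟨g⟩` has exponents `nᵢ` and `mᵢ`.
Finally `m₀ < k₀` and `kᵢ₋₁ < mᵢ < kᵢ`, so as `k` is strictly increasing no `mᵢ` is a `kⱼ`.
-/

open Function

theorem strictMonoOn_Iio_of_lt_add_one {f : ℕ → ℕ} {s : ℕ}
    (hf : ∀ i, i + 1 < s → f i < f (i + 1)) : StrictMonoOn f (Set.Iio s) := by
  intro i _ j hj hij
  induction hij with
  | refl => exact hf i hj
  | step _ ih => exact (ih (by simp only [Set.mem_Iio] at hj ⊢; omega)).trans (hf _ hj)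

namespace ZMod

noncomputable def mulNatHom (N M c : ℕ) (h : M ∣ N * c) : ZMod N →+ ZMod M :=
  ZMod.lift N ⟨zmultiplesHom (ZMod M) (c : ZMod M), by
    simpa [zsmul_eq_mul, ← Nat.cast_mul] using (ZMod.natCast_eq_zero_iff _ _).2 h⟩

theorem mulNatHom_natCast (N M c : ℕ) (h : M ∣ N * c) (a : ℕ) :
    mulNatHom N M c h a = ((a * c : ℕ) : ZMod M) := by
  rw [← Int.cast_natCast, mulNatHom, ZMod.lift_coe]
  simp [zsmul_eq_mul]

end ZMod

section Bidiagonal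

variable {s : ℕ} {A B : ℕ → Type*} [∀ j, AddCommGroup (A j)] [∀ j, AddCommGroup (B j)]
  (π : ∀ j < s, A j →+ B j) (φ : ∀ j, j + 1 < s → A j →+ B (j + 1))

def bidiagonalCoord : (j : ℕ) → j < s → (∀ i : Fin s, A i) →+ B j
  | 0, h => (π 0 h).comp (Pi.evalAddMonoidHom (fun i : Fin s => A i) ⟨0, h⟩)
  | j + 1, h => (π (j + 1) h).comp (Pi.evalAddMonoidHom (fun i : Fin s => A i) ⟨j + 1, h⟩) -
      (φ j h).comp (Pi.evalAddMonoidHom (fun i : Fin s => A i) ⟨j, by omega⟩)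

def bidiagonalHom : (∀ i : Fin s, A i) →+ ∀ i : Fin s, B i :=
  AddMonoidHom.pi fun i => bidiagonalCoord π φ i.1 i.2

theorem bidiagonalHom_apply_zero (x : ∀ i : Fin s, A i) (h : 0 < s) :
    bidiagonalHom π φ x ⟨0, h⟩ = π 0 h (x ⟨0, h⟩) :=
  rfl

theorem bidiagonalHom_apply_succ (x : ∀ i : Fin s, A i) (j : ℕ) (h : j + 1 < s) :
    bidiagonalHom π φ x ⟨j + 1, h⟩ = π (j + 1) h (x ⟨j + 1, h⟩) - φ j h (x ⟨j, by omega⟩) :=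
  rfl

noncomputable def bidiagonalPreimage (y : ∀ i : Fin s, B i) : ∀ j, j < s → A j
  | 0, h => invFun (π 0 h) (y ⟨0, h⟩)
  | j + 1, h => invFun (π (j + 1) h) (y ⟨j + 1, h⟩ + φ j h (bidiagonalPreimage y j (by omega)))

theorem bidiagonalHom_surjective (hπ : ∀ j (hj : j < s), Surjective (π j hj)) :
    Surjective (bidiagonalHom π φ) := by
  intro y
  refine ⟨fun i => bidiagonalPreimage π φ y i.1 i.2, funext fun ⟨j, hj⟩ => ?_⟩
  cases j with
  | zero => exact invFun_eq (hπ 0 hj _)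
  | succ j =>
    rw [bidiagonalHom_apply_succ]
    simp only [bidiagonalPreimage]
    rw [invFun_eq (hπ _ hj _), add_sub_cancel_right]

end Bidiagonal

theorem exists_surjective_pi_zmod_pow_map_eq_zero (p s : ℕ) (a b e : ℕ → ℕ)
    (hba : ∀ j < s, b j ≤ a j) (hbe : b 0 ≤ e 0) (he : ∀ j, j + 1 < s → e j ≤ e (j + 1))
    (hb : ∀ j, j + 1 < s → b (j + 1) = a j + (e (j + 1) - e j)) :
    ∃ ψ : (∀ i : Fin s, ZMod (p ^ a i)) →+ ∀ i : Fin s, ZMod (p ^ b i),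
      Surjective ψ ∧ ψ (fun i => ((p ^ e i : ℕ) : ZMod (p ^ a i))) = 0 := by
  let π j (hj : j < s) : ZMod (p ^ a j) →+ ZMod (p ^ b j) :=
    (ZMod.castHom (pow_dvd_pow p (hba j hj)) _).toAddMonoidHom
  let φ j (hj : j + 1 < s) : ZMod (p ^ a j) →+ ZMod (p ^ b (j + 1)) :=
    ZMod.mulNatHom _ _ (p ^ (e (j + 1) - e j)) (by rw [← pow_add, hb j hj])
  refine ⟨bidiagonalHom π φ, bidiagonalHom_surjective π φ fun j _ => ZMod.ringHom_surjective _,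
    funext fun ⟨j, hj⟩ => ?_⟩
  cases j with
  | zero =>
    rw [bidiagonalHom_apply_zero]
    simp only [π, RingHom.toAddMonoidHom_eq_coe, AddMonoidHom.coe_coe, map_natCast, Pi.zero_apply]
    exact (ZMod.natCast_eq_zero_iff _ _).2 (pow_dvd_pow p hbe)
  | succ j =>
    rw [bidiagonalHom_apply_succ]
    simp only [π, φ, RingHom.toAddMonoidHom_eq_coe, AddMonoidHom.coe_coe, map_natCast,
      ZMod.mulNatHom_natCast, ← pow_add, Nat.add_sub_cancel' (he j hj), sub_self, Pi.zero_apply]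

theorem nonempty_quotient_zmultiples_addEquiv {G M : Type*} [AddCommGroup G] [AddCommGroup M]
    [Finite G] {g : G} (ψ : G →+ M) (hψ : Surjective ψ) (hg : ψ g = 0)
    (hcard : Nat.card G = Nat.card M * addOrderOf g) :
    Nonempty (G ⧸ AddSubgroup.zmultiples g ≃+ M) := by
  have hker : AddSubgroup.zmultiples g = ψ.ker := by
    refine AddSubgroup.eq_of_le_of_card_ge (AddSubgroup.zmultiples_le.2 hg) (le_of_eq ?_)
    have hindex : ψ.ker.index = Nat.card M := by
      rw [AddSubgroup.index_ker, AddMonoidHom.range_eq_top.2 hψ, AddSubgroup.card_top]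
    rw [Nat.card_zmultiples, ← Nat.mul_left_cancel_iff (Nat.pos_of_ne_zero
      (hindex ▸ ψ.ker.index_ne_zero_of_finite)), ← hindex, ψ.ker.index_mul_card, hindex, hcard]
  exact ⟨(QuotientAddGroup.quotientAddEquivOfEq hker).trans
    (QuotientAddGroup.quotientKerEquivOfSurjective ψ hψ)⟩

theorem nonempty_prod_quotient_zmultiples_addEquiv {A H M : Type*} [AddCommGroup A]
    [AddCommGroup H] [AddCommGroup M] [Finite A] [Finite H] {v : H} (ψ : H →+ M)
    (hψ : Surjective ψ) (hv : ψ v = 0) (hcard : Nat.card H = Nat.card M * addOrderOf v) :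
    Nonempty ((A × H) ⧸ AddSubgroup.zmultiples ((0, v) : A × H) ≃+ A × M) := by
  refine nonempty_quotient_zmultiples_addEquiv ((AddMonoidHom.id A).prodMap ψ)
    (surjective_id.prodMap hψ) (by simp [hv]) ?_
  rw [Prod.addOrderOf_mk, addOrderOf_zero, Nat.lcm_one_left, Nat.card_prod, Nat.card_prod, hcard,
    mul_assoc]

theorem ZMod.addOrderOf_natCast_pow_sub {p k r : ℕ} (hp : 0 < p) (hrk : r ≤ k) :
    addOrderOf ((p ^ (k - r) : ℕ) : ZMod (p ^ k)) = p ^ r := by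
  rw [ZMod.addOrderOf_coe _ (pow_ne_zero _ hp.ne'),
    Nat.gcd_eq_right (pow_dvd_pow p (Nat.sub_le k r)), Nat.pow_div (Nat.sub_le k r) hp]
  congr 1
  omega

theorem addOrderOf_pi_natCast_pow_sub {p s : ℕ} (hp : 0 < p) (k r : ℕ → ℕ)
    (hrk : ∀ i < s, r i ≤ k i) (i₀ : Fin s) (hmax : ∀ i : Fin s, r i ≤ r i₀) :
    addOrderOf (fun i : Fin s => ((p ^ (k i - r i) : ℕ) : ZMod (p ^ k i))) = p ^ r i₀ := by
  rw [Pi.addOrderOf]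
  simp only [ZMod.addOrderOf_natCast_pow_sub hp (hrk _ (Fin.is_lt _))]
  exact Nat.dvd_antisymm (Finset.lcm_dvd fun i _ => pow_dvd_pow p (hmax i))
    (Finset.dvd_lcm (Finset.mem_univ i₀))

theorem Nat.card_pi_zmod_pow (p N : ℕ) (f : ℕ → ℕ) :
    Nat.card (∀ i : Fin N, ZMod (p ^ f i)) = p ^ ∑ i ∈ Finset.range N, f i := by
  simp only [Nat.card_pi, Nat.card_zmod, Finset.prod_pow_eq_pow_sum, Fin.sum_univ_eq_sum_range]

def quotientExponent (k r : ℕ → ℕ) (i : ℕ) : ℕ :=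
  if i = 0 then k 0 - r 0 else k i - r i + r (i - 1)

theorem quotientExponent_zero (k r : ℕ → ℕ) : quotientExponent k r 0 = k 0 - r 0 :=
  rfl

theorem quotientExponent_succ (k r : ℕ → ℕ) (j : ℕ) :
    quotientExponent k r (j + 1) = k (j + 1) - r (j + 1) + r j :=
  rfl

theorem quotientExponent_le {s : ℕ} {k r : ℕ → ℕ} (hrk : ∀ i < s, r i ≤ k i)
    (hr : ∀ i, i + 1 < s → r i < r (i + 1)) : ∀ j < s, quotientExponent k r j ≤ k j := by
  rintro (_ | j) hj
  · exact Nat.sub_le _ _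
  · have := hrk (j + 1) hj; have := hr j hj
    rw [quotientExponent_succ]
    omega

theorem quotientExponent_succ_eq_add {s : ℕ} {k r : ℕ → ℕ} (hrk : ∀ i < s, r i ≤ k i)
    (hkr : ∀ i, i + 1 < s → k i - r i < k (i + 1) - r (i + 1)) (j : ℕ) (hj : j + 1 < s) :
    quotientExponent k r (j + 1) = k j + ((k (j + 1) - r (j + 1)) - (k j - r j)) := by
  have := hrk j (by omega); have := hrk (j + 1) hj; have := hkr j hj
  rw [quotientExponent_succ]
  omega

theorem sum_range_quotientExponent_add {k r : ℕ → ℕ} (s : ℕ) (hrk : ∀ i ≤ s, r i ≤ k i) :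
    ∑ i ∈ Finset.range (s + 1), quotientExponent k r i + r s = ∑ i ∈ Finset.range (s + 1), k i := by
  induction s with
  | zero => simp [quotientExponent_zero, Nat.sub_add_cancel (hrk 0 le_rfl)]
  | succ s ih =>
    have hsum := ih fun i hi => hrk i (by omega)
    have hrs := hrk (s + 1) le_rfl
    simp only [Finset.sum_range_succ _ (s + 1), quotientExponent_succ] at hsum ⊢
    omega

theorem disjoint_map_map_quotientExponent {s : ℕ} {k r : ℕ → ℕ} (hr0 : 0 < r 0)
    (hrk : ∀ i < s, r i ≤ k i) (hk : StrictMonoOn k (Set.Iio s))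
    (hr : ∀ i, i + 1 < s → r i < r (i + 1))
    (hkr : ∀ i, i + 1 < s → k i - r i < k (i + 1) - r (i + 1)) :
    Disjoint ((Multiset.range s).map k) ((Multiset.range s).map (quotientExponent k r)) := by
  simp only [Multiset.disjoint_left, Multiset.mem_map, Multiset.mem_range, not_exists, not_and]
  rintro _ ⟨i, hi, rfl⟩ j hj hij
  cases j with
  | zero =>
    have : k 0 ≤ k i := hk.monotoneOn (show 0 < s by omega) hi (Nat.zero_le i)
    have := hrk 0 (by omega)
    rw [quotientExponent_zero] at hij
    omega
  | succ j =>
    have hlt : k j < quotientExponent k r (j + 1) ∧ quotientExponent k r (j + 1) < k (j + 1) := by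
      have := hrk j (by omega); have := hrk (j + 1) hj; have := hr j hj; have := hkr j hj
      rw [quotientExponent_succ]
      omega
    rw [hij, hk.lt_iff_lt (show j < s by omega) hi, hk.lt_iff_lt hi hj] at hlt
    omega

theorem stmt19_general {p : ℕ} (hp : p.Prime) (t s l : ℕ) (hs : 1 ≤ s)
    (n k r : ℕ → ℕ)
    (hr0 : ∀ i < s, 0 < r i) (hrk : ∀ i < s, r i ≤ k i) (hrl : r (s - 1) = l)
    (hk : ∀ i, i + 1 < s → k i < k (i + 1))
    (hr : ∀ i, i + 1 < s → r i < r (i + 1))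
    (hkr : ∀ i, i + 1 < s → k i - r i < k (i + 1) - r (i + 1)) :
    Nonempty ((((∀ i : Fin (t - s), ZMod (p ^ n i.1)) × (∀ i : Fin s, ZMod (p ^ k i.1))) ⧸
        AddSubgroup.zmultiples
          ((0, fun i : Fin s => ((p ^ (k i.1 - r i.1) : ℕ) : ZMod (p ^ k i.1))) :
            (∀ i : Fin (t - s), ZMod (p ^ n i.1)) × (∀ i : Fin s, ZMod (p ^ k i.1)))) ≃+
      ((∀ i : Fin (t - s), ZMod (p ^ n i.1)) ×
        (∀ i : Fin s,
          ZMod (p ^ (if i.1 = 0 then k 0 - r 0 else k i.1 - r i.1 + r (i.1 - 1)))))) ∧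
    ((Multiset.range (t - s)).map n + (Multiset.range s).map k) ∩
        ((Multiset.range (t - s)).map n +
          (((Multiset.range s).map
            (fun i => if i = 0 then k 0 - r 0 else k i - r i + r (i - 1))).filter
              (fun x => 0 < x))) =
      (Multiset.range (t - s)).map n := by
  have : NeZero p := ⟨hp.ne_zero⟩
  obtain ⟨ψ, hψ, hψg⟩ := exists_surjective_pi_zmod_pow_map_eq_zero p s k (quotientExponent k r)
    (fun j => k j - r j) (quotientExponent_le hrk hr) le_rfl (fun j hj => (hkr j hj).le)
    (quotientExponent_succ_eq_add hrk hkr)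
  have horder : addOrderOf (fun i : Fin s => ((p ^ (k i - r i) : ℕ) : ZMod (p ^ k i))) = p ^ l :=
    hrl ▸ addOrderOf_pi_natCast_pow_sub hp.pos k r hrk ⟨s - 1, by omega⟩
      fun i => (strictMonoOn_Iio_of_lt_add_one hr).monotoneOn i.2 (show s - 1 < s by omega)
        (Nat.le_sub_one_of_lt i.2)
  have hcard : Nat.card (∀ i : Fin s, ZMod (p ^ k i)) =
      Nat.card (∀ i : Fin s, ZMod (p ^ quotientExponent k r i)) * p ^ l := by
    obtain ⟨s, rfl⟩ : ∃ s', s = s' + 1 := ⟨s - 1, by omega⟩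
    rw [Nat.card_pi_zmod_pow, Nat.card_pi_zmod_pow, ← pow_add, ← hrl, Nat.add_sub_cancel,
      sum_range_quotientExponent_add s fun i hi => hrk i (by omega)]
  refine ⟨nonempty_prod_quotient_zmultiples_addEquiv ψ hψ hψg (horder ▸ hcard), ?_⟩
  rw [← Multiset.add_inter_distrib, Multiset.inter_eq_zero_iff_disjoint.2, add_zero]
  exact (disjoint_map_map_quotientExponent (hr0 0 (by omega)) hrk
    (strictMonoOn_Iio_of_lt_add_one hk) hr hkr).mono_right (Multiset.filter_le _ _)

/-- Let `G = (⊕ᵢ ℤ/p^{nᵢ}) ⊕ (⊕ᵢ ℤ/p^{kᵢ})` and let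
`g = (0, (p^{kᵢ−rᵢ})ᵢ)` be in normal form (`0 < rᵢ ≤ kᵢ`, `r_s = l`, `kᵢ` increasing,
`rᵢ` increasing, `kᵢ − rᵢ` strictly increasing).  Then `G ⧸ ⟨g⟩` is isomorphic to
`(⊕ᵢ ℤ/p^{nᵢ}) ⊕ (ℤ/p^{k₁−r₁} ⊕ ⊕_{i≥2} ℤ/p^{kᵢ−rᵢ+rᵢ₋₁})`, and the common part of the
exponent multisets of `G` and `G ⧸ ⟨g⟩` is exactly `{n₁, …, n_{t−s}}`. -/
theorem stmt19 {p : ℕ} (hp : p.Prime) (t s l : ℕ) (hs : 1 ≤ s) (hst : s ≤ t)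
    (n k r : ℕ → ℕ)
    (hn : ∀ i < t - s, 0 < n i)
    (hr0 : ∀ i < s, 0 < r i) (hrk : ∀ i < s, r i ≤ k i) (hrl : r (s - 1) = l)
    (hk : ∀ i, i + 1 < s → k i < k (i + 1))
    (hr : ∀ i, i + 1 < s → r i < r (i + 1))
    (hkr : ∀ i, i + 1 < s → k i - r i < k (i + 1) - r (i + 1)) :
    Nonempty ((((∀ i : Fin (t - s), ZMod (p ^ n i.1)) × (∀ i : Fin s, ZMod (p ^ k i.1))) ⧸
        AddSubgroup.zmultiples
          ((0, fun i : Fin s => ((p ^ (k i.1 - r i.1) : ℕ) : ZMod (p ^ k i.1))) :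
            (∀ i : Fin (t - s), ZMod (p ^ n i.1)) × (∀ i : Fin s, ZMod (p ^ k i.1)))) ≃+
      ((∀ i : Fin (t - s), ZMod (p ^ n i.1)) ×
        (∀ i : Fin s,
          ZMod (p ^ (if i.1 = 0 then k 0 - r 0 else k i.1 - r i.1 + r (i.1 - 1)))))) ∧
    ((Multiset.range (t - s)).map n + (Multiset.range s).map k) ∩
        ((Multiset.range (t - s)).map n +
          (((Multiset.range s).map
            (fun i => if i = 0 then k 0 - r 0 else k i - r i + r (i - 1))).filter
              (fun x => 0 < x))) =
      (Multiset.range (t - s)).map n :=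
  stmt19_general hp t s l hs n k r hr0 hrk hrl hk hr hkr
end
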